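/- arXiv:2105.11627 — 2 statements merged into one kernel-verified Lean document; each statement's English description precedes it below -/
import Mathlib

section
/- Let u_L, u_R ∈ ℝ with u_L < u_R and let f(u) = u²/2 (the Burgers flux). The rarefaction-wave function u : ℝ × (0,∞) → ℝ defined by u(x,t) = u_L if x < u_L·t, u(x,t) = x/t if u_L·t ≤ x ≤ u_R·t, and u(x,t) = u_R if x > u_R·t, is a weak solution of u_t + (u²/2)_x = 0 with initial data u₀(x) = u_L for x ≤ 0 and u₀(x) = u_R for x > 0. -/
open MeasureTheory Set Filter

lemma hcs_exists_bound {ψ : ℝ → ℝ} (hc : HasCompactSupport ψ) :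
    ∃ T : ℝ, 0 < T ∧ ∀ s, T ≤ |s| → ψ s = 0 := by
  obtain ⟨r, hr⟩ := hc.isCompact.isBounded.subset_closedBall 0
  refine ⟨max r 0 + 1, by positivity, fun s hs => ?_⟩
  apply image_eq_zero_of_notMem_tsupport
  intro hm
  have := hr hm
  simp only [Metric.mem_closedBall, Real.dist_eq, sub_zero] at this
  have : |s| ≤ max r 0 := le_trans this (le_max_left _ _)
  linarith

lemma deriv_zero_of_bound {ψ : ℝ → ℝ} {T : ℝ}
    (hT : ∀ s, T ≤ |s| → ψ s = 0) {t : ℝ} (ht : T < |t|) : deriv ψ t = 0 := by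
  have hopen : IsOpen {z : ℝ | T < |z|} := isOpen_lt continuous_const continuous_abs
  have hmem : {z : ℝ | T < |z|} ∈ nhds t := hopen.mem_nhds ht
  have h : ψ =ᶠ[nhds t] fun _ => (0 : ℝ) :=
    eventually_of_mem hmem fun z hz => hT z (le_of_lt hz)
  rw [h.deriv_eq, deriv_const]

lemma tendsto_zero_of_bound {ψ : ℝ → ℝ} {T : ℝ} (hT : ∀ s, T ≤ |s| → ψ s = 0)
    (g : ℝ → ℝ) : Tendsto (fun t => g t * ψ t) atTop (nhds 0) := by
  have h : (fun t => g t * ψ t) =ᶠ[atTop] fun _ => (0 : ℝ) := by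
    filter_upwards [eventually_ge_atTop (max T 0)] with t ht
    have h1 : T ≤ |t| := by
      rw [abs_of_nonneg (le_trans (le_max_right _ _) ht)]
      exact le_trans (le_max_left _ _) ht
    rw [hT t h1, mul_zero]
  exact Tendsto.congr' h.symm tendsto_const_nhds

lemma ibp_t0 {ψ : ℝ → ℝ} (hψ : ContDiff ℝ (⊤ : ℕ∞) ψ) (hc : HasCompactSupport ψ) (c : ℝ) :
    ∫ t in Ioi (0 : ℝ), c * deriv ψ t = -(c * ψ 0) := by
  obtain ⟨T, -, hT⟩ := hcs_exists_bound hc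
  have hd : Continuous (deriv ψ) := hψ.continuous_deriv (by simp)
  have := integral_Ioi_of_hasDerivAt_of_tendsto
    (f := fun t => c * ψ t) (f' := fun t => c * deriv ψ t) (a := (0:ℝ)) (m := 0)
    ((continuous_const.mul hψ.continuous).continuousWithinAt)
    (fun t _ => ((hψ.differentiable (by simp)).differentiableAt.hasDerivAt).const_mul c)
    (((continuous_const.mul hd).integrable_of_hasCompactSupport (hc.deriv.mul_left)).integrableOn)
    (tendsto_zero_of_bound hT _)
  rw [this]; ring

lemma hasDerivAt_div_self (x t : ℝ) (ht : t ≠ 0) :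
    HasDerivAt (fun s : ℝ => x / s) (-(x / t ^ 2)) t := by
  have := (hasDerivAt_inv ht).const_mul x
  have heq : -(x / t ^ 2) = x * -(t ^ 2)⁻¹ := by rw [div_eq_mul_inv]; ring
  rw [heq]
  simp only [div_eq_mul_inv]
  exact this

lemma integrableOn_Ioi_bddmul {ψ : ℝ → ℝ} (hψc : Continuous ψ) (hc : HasCompactSupport ψ)
    (g : ℝ → ℝ) (hg : Measurable g) {a C : ℝ} (hC : ∀ t ∈ Ioi a, |g t| ≤ C) :
    IntegrableOn (fun t => g t * ψ t) (Ioi a) := by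
  refine Integrable.mono' (g := fun t => C * |ψ t|)
    (((hψc.norm.integrable_of_hasCompactSupport hc.norm).const_mul C).restrict)
    ((hg.aestronglyMeasurable.mul hψc.aestronglyMeasurable).restrict) ?_
  filter_upwards [ae_restrict_mem measurableSet_Ioi] with t ht
  rw [Real.norm_eq_abs, abs_mul]
  exact mul_le_mul_of_nonneg_right (hC t ht) (abs_nonneg _)

lemma ibp_t2 {ψ : ℝ → ℝ} (hψ : ContDiff ℝ (⊤ : ℕ∞) ψ) (hc : HasCompactSupport ψ)
    (x t₁ : ℝ) (ht₁ : 0 < t₁) (v : ℝ → ℝ)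
    (hv1 : ∀ t ∈ Ioc (0:ℝ) t₁, v t = x / t₁)
    (hv2 : ∀ t ∈ Ioi t₁, v t = x / t) :
    ∫ t in Ioi (0:ℝ), v t * deriv ψ t
      = -(x / t₁ * ψ 0) + ∫ t in Ioi t₁, x / t ^ 2 * ψ t := by
  obtain ⟨T, -, hT⟩ := hcs_exists_bound hc
  have hd : Continuous (deriv ψ) := hψ.continuous_deriv (by simp)
  have hcont : Continuous ψ := hψ.continuous
  -- integrability pieces
  have Ia1 : IntegrableOn (fun t => x / t * deriv ψ t) (Ioi t₁) := by
    refine integrableOn_Ioi_bddmul hd hc.deriv (fun t => x / t)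
      (measurable_const.div measurable_id) (C := |x| / t₁) fun t ht => ?_
    have htpos : (0:ℝ) < t := lt_trans ht₁ ht
    rw [abs_div, abs_of_pos htpos]
    exact div_le_div_of_nonneg_left (abs_nonneg x) ht₁ (le_of_lt ht)
  have Ia2 : IntegrableOn (fun t => x / t ^ 2 * ψ t) (Ioi t₁) := by
    refine integrableOn_Ioi_bddmul hcont hc (fun t => x / t ^ 2)
      (measurable_const.div (measurable_id.pow_const 2)) (C := |x| / t₁ ^ 2) fun t ht => ?_
    have htpos : (0:ℝ) < t := lt_trans ht₁ ht
    rw [abs_div, abs_of_pos (pow_pos htpos 2)]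
    exact div_le_div_of_nonneg_left (abs_nonneg x) (pow_pos ht₁ 2)
      (pow_le_pow_left₀ ht₁.le (le_of_lt ht) 2)
  have Ic1 : IntegrableOn (fun t => x / t₁ * deriv ψ t) (Ioc (0:ℝ) t₁) :=
    (continuous_const.mul hd).integrableOn_Ioc
  have hsplit : ∫ t in Ioi (0:ℝ), v t * deriv ψ t
      = (∫ t in Ioc 0 t₁, v t * deriv ψ t) + ∫ t in Ioi t₁, v t * deriv ψ t := by
    rw [← setIntegral_union (Ioc_disjoint_Ioi le_rfl) measurableSet_Ioi
      (Ic1.congr_fun (fun t ht => by simp only [hv1 t ht]) measurableSet_Ioc)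
      (Ia1.congr_fun (fun t ht => by simp only [hv2 t ht]) measurableSet_Ioi),
      Ioc_union_Ioi_eq_Ioi ht₁.le]
  have p1 : ∫ t in Ioc (0:ℝ) t₁, v t * deriv ψ t = x / t₁ * ψ t₁ - x / t₁ * ψ 0 := by
    have e1 : EqOn (fun t => v t * deriv ψ t) (fun t => x / t₁ * deriv ψ t) (Ioc 0 t₁) :=
      fun t ht => by simp only [hv1 t ht]
    rw [setIntegral_congr_fun measurableSet_Ioc e1,
      ← intervalIntegral.integral_of_le ht₁.le, intervalIntegral.integral_const_mul,
      intervalIntegral.integral_deriv_eq_sub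
        (fun y _ => (hψ.differentiable (by simp)).differentiableAt)
        (hd.intervalIntegrable _ _)]
    ring
  have p2 : ∫ t in Ioi t₁, v t * deriv ψ t
      = -(x / t₁ * ψ t₁) + ∫ t in Ioi t₁, x / t ^ 2 * ψ t := by
    have e2 : EqOn (fun t => v t * deriv ψ t) (fun t => x / t * deriv ψ t) (Ioi t₁) :=
      fun t ht => by simp only [hv2 t ht]
    rw [setIntegral_congr_fun measurableSet_Ioi e2]
    have key : ∫ t in Ioi t₁, (-(x / t ^ 2 * ψ t) + x / t * deriv ψ t)
        = 0 - x / t₁ * ψ t₁ := by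
      apply integral_Ioi_of_hasDerivAt_of_tendsto
      · exact ((continuousAt_const.div continuousAt_id ht₁.ne').mul
          hcont.continuousAt).continuousWithinAt
      · intro t ht
        have htne : t ≠ 0 := (lt_trans ht₁ ht).ne'
        have h1 := (hasDerivAt_div_self x t htne).mul
          (hψ.differentiable (by simp)).differentiableAt.hasDerivAt
        exact h1.congr_deriv (by ring)
      · have Ia2n : IntegrableOn (fun t => -(x / t ^ 2 * ψ t)) (Ioi t₁) := Ia2.neg
        exact Ia2n.add Ia1
      · exact tendsto_zero_of_bound hT _
    have Ia2n : IntegrableOn (fun t => -(x / t ^ 2 * ψ t)) (Ioi t₁) := Ia2.neg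
    rw [integral_add Ia2n Ia1, integral_neg] at key
    linarith
  rw [hsplit, p1, p2]
  ring

lemma ibp_t3 {ψ : ℝ → ℝ} (hψ : ContDiff ℝ (⊤ : ℕ∞) ψ) (hc : HasCompactSupport ψ)
    (x t₁ t₂ : ℝ) (ht₁ : 0 < t₁) (h12 : t₁ ≤ t₂) (v : ℝ → ℝ)
    (hv1 : ∀ t ∈ Ioc (0:ℝ) t₁, v t = x / t₁)
    (hv2 : ∀ t ∈ Ioc t₁ t₂, v t = x / t)
    (hv3 : ∀ t ∈ Ioi t₂, v t = x / t₂) :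
    ∫ t in Ioi (0:ℝ), v t * deriv ψ t
      = -(x / t₁ * ψ 0) + ∫ t in Ioc t₁ t₂, x / t ^ 2 * ψ t := by
  obtain ⟨T, -, hT⟩ := hcs_exists_bound hc
  have ht₂ : (0:ℝ) < t₂ := lt_of_lt_of_le ht₁ h12
  have hd : Continuous (deriv ψ) := hψ.continuous_deriv (by simp)
  have hcont : Continuous ψ := hψ.continuous
  have hdiff : ∀ y : ℝ, DifferentiableAt ℝ ψ y := fun y =>
    (hψ.differentiable (by simp)).differentiableAt
  have hcon1 : ContinuousOn (fun t => x / t * deriv ψ t) (Icc t₁ t₂) := by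
    refine ContinuousOn.mul (ContinuousOn.div continuousOn_const continuousOn_id
      fun t ht => ?_) hd.continuousOn
    exact ne_of_gt (lt_of_lt_of_le ht₁ ht.1)
  have hcon2 : ContinuousOn (fun t => x / t ^ 2 * ψ t) (Icc t₁ t₂) := by
    refine ContinuousOn.mul (ContinuousOn.div continuousOn_const
      (continuousOn_id.pow 2) fun t ht => ?_) hcont.continuousOn
    exact ne_of_gt (pow_pos (lt_of_lt_of_le ht₁ ht.1) 2)
  have Ic1 : IntegrableOn (fun t => x / t₁ * deriv ψ t) (Ioc (0:ℝ) t₁) :=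
    (continuous_const.mul hd).integrableOn_Ioc
  have Ic2 : IntegrableOn (fun t => x / t * deriv ψ t) (Ioc t₁ t₂) := by
    rw [← intervalIntegrable_iff_integrableOn_Ioc_of_le h12]
    exact (hcon1.mono (by rw [uIcc_of_le h12])).intervalIntegrable
  have Ic2b : IntegrableOn (fun t => x / t ^ 2 * ψ t) (Ioc t₁ t₂) := by
    rw [← intervalIntegrable_iff_integrableOn_Ioc_of_le h12]
    exact (hcon2.mono (by rw [uIcc_of_le h12])).intervalIntegrable
  have Ic3 : IntegrableOn (fun t => x / t₂ * deriv ψ t) (Ioi t₂) :=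
    ((continuous_const.mul hd).integrable_of_hasCompactSupport hc.deriv.mul_left).integrableOn
  have hsplit2 : ∫ t in Ioi t₁, v t * deriv ψ t
      = (∫ t in Ioc t₁ t₂, v t * deriv ψ t) + ∫ t in Ioi t₂, v t * deriv ψ t := by
    rw [← setIntegral_union (Ioc_disjoint_Ioi le_rfl) measurableSet_Ioi
      (Ic2.congr_fun (fun t ht => by simp only [hv2 t ht]) measurableSet_Ioc)
      (Ic3.congr_fun (fun t ht => by simp only [hv3 t ht]) measurableSet_Ioi),
      Ioc_union_Ioi_eq_Ioi h12]
  have hIv2 : IntegrableOn (fun t => v t * deriv ψ t) (Ioi t₁) := by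
    rw [← Ioc_union_Ioi_eq_Ioi h12]
    exact IntegrableOn.union
      (Ic2.congr_fun (fun t ht => by simp only [hv2 t ht]) measurableSet_Ioc)
      (Ic3.congr_fun (fun t ht => by simp only [hv3 t ht]) measurableSet_Ioi)
  have hsplit : ∫ t in Ioi (0:ℝ), v t * deriv ψ t
      = (∫ t in Ioc 0 t₁, v t * deriv ψ t) + ∫ t in Ioi t₁, v t * deriv ψ t := by
    rw [← setIntegral_union (Ioc_disjoint_Ioi le_rfl) measurableSet_Ioi
      (Ic1.congr_fun (fun t ht => by simp only [hv1 t ht]) measurableSet_Ioc) hIv2,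
      Ioc_union_Ioi_eq_Ioi ht₁.le]
  have p1 : ∫ t in Ioc (0:ℝ) t₁, v t * deriv ψ t = x / t₁ * ψ t₁ - x / t₁ * ψ 0 := by
    have e1 : EqOn (fun t => v t * deriv ψ t) (fun t => x / t₁ * deriv ψ t) (Ioc 0 t₁) :=
      fun t ht => by simp only [hv1 t ht]
    rw [setIntegral_congr_fun measurableSet_Ioc e1,
      ← intervalIntegral.integral_of_le ht₁.le, intervalIntegral.integral_const_mul,
      intervalIntegral.integral_deriv_eq_sub (fun y _ => hdiff y) (hd.intervalIntegrable _ _)]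
    ring
  have p3 : ∫ t in Ioi t₂, v t * deriv ψ t = -(x / t₂ * ψ t₂) := by
    have e3 : EqOn (fun t => v t * deriv ψ t) (fun t => x / t₂ * deriv ψ t) (Ioi t₂) :=
      fun t ht => by simp only [hv3 t ht]
    rw [setIntegral_congr_fun measurableSet_Ioi e3]
    have := integral_Ioi_of_hasDerivAt_of_tendsto
      (f := fun t => x / t₂ * ψ t) (f' := fun t => x / t₂ * deriv ψ t) (a := t₂) (m := 0)
      ((continuous_const.mul hcont).continuousWithinAt)
      (fun t _ => (hdiff t).hasDerivAt.const_mul (x / t₂)) Ic3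
      (tendsto_zero_of_bound hT _)
    rw [this]; ring
  have p2 : ∫ t in Ioc t₁ t₂, v t * deriv ψ t
      = (x / t₂ * ψ t₂ - x / t₁ * ψ t₁) + ∫ t in Ioc t₁ t₂, x / t ^ 2 * ψ t := by
    have e2 : EqOn (fun t => v t * deriv ψ t) (fun t => x / t * deriv ψ t) (Ioc t₁ t₂) :=
      fun t ht => by simp only [hv2 t ht]
    rw [setIntegral_congr_fun measurableSet_Ioc e2,
      ← intervalIntegral.integral_of_le h12]
    have key : ∫ t in t₁..t₂, (-(x / t ^ 2 * ψ t) + x / t * deriv ψ t)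
        = x / t₂ * ψ t₂ - x / t₁ * ψ t₁ := by
      apply intervalIntegral.integral_eq_sub_of_hasDerivAt
      · intro t ht
        rw [uIcc_of_le h12] at ht
        have htne : t ≠ 0 := ne_of_gt (lt_of_lt_of_le ht₁ ht.1)
        have h1 := (hasDerivAt_div_self x t htne).mul (hdiff t).hasDerivAt
        exact h1.congr_deriv (by ring)
      · refine ContinuousOn.intervalIntegrable ?_
        rw [uIcc_of_le h12]
        exact (hcon2.neg).add hcon1
    have hii1 : IntervalIntegrable (fun t => -(x / t ^ 2 * ψ t)) volume t₁ t₂ :=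
      ContinuousOn.intervalIntegrable (by rw [uIcc_of_le h12]; exact hcon2.neg)
    have hii2 : IntervalIntegrable (fun t => x / t * deriv ψ t) volume t₁ t₂ :=
      ContinuousOn.intervalIntegrable (by rw [uIcc_of_le h12]; exact hcon1)
    rw [intervalIntegral.integral_add hii1 hii2, intervalIntegral.integral_neg] at key
    rw [← intervalIntegral.integral_of_le h12]
    linarith
  rw [hsplit, hsplit2, p1, p2, p3]
  ring

lemma ibp_x (uL uR : ℝ) (h : uL < uR) (t : ℝ) (ht : 0 < t)
    {ψ : ℝ → ℝ} (hψ : ContDiff ℝ (⊤ : ℕ∞) ψ) (hc : HasCompactSupport ψ) :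
    ∫ y : ℝ, (if y < uL * t then uL else if y ≤ uR * t then y / t else uR) ^ 2 / 2 * deriv ψ y
      = - ∫ y in Icc (uL * t) (uR * t), y / t ^ 2 * ψ y := by
  obtain ⟨T, hTpos, hT⟩ := hcs_exists_bound hc
  set a := uL * t with ha
  set b := uR * t with hb
  have hab : a < b := by
    rw [ha, hb]; exact mul_lt_mul_of_pos_right h ht
  set w : ℝ → ℝ := fun y => if y < a then uL else if y ≤ b then y / t else uR with hw
  have hd : Continuous (deriv ψ) := hψ.continuous_deriv (by simp)
  have hcont : Continuous ψ := hψ.continuous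
  have hdiff : ∀ y : ℝ, DifferentiableAt ℝ ψ y := fun y =>
    (hψ.differentiable (by simp)).differentiableAt
  have hws1 : ∀ y ≤ a, w y ^ 2 / 2 = uL ^ 2 / 2 := by
    intro y hy
    by_cases hlt : y < a
    · simp only [hw, if_pos hlt]
    · have hy' : y = a := le_antisymm hy (not_lt.1 hlt)
      rw [hy']
      have hwa : w a = uL := by
        show (if a < a then uL else if a ≤ b then a / t else uR) = uL
        rw [if_neg (lt_irrefl a), if_pos hab.le, ha, mul_div_cancel_right₀ _ ht.ne']
      rw [hwa]
  have hws2 : ∀ y, a ≤ y → y ≤ b → w y = y / t := by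
    intro y h1 h2
    simp only [hw, if_neg (not_lt.2 h1), if_pos h2]
  have hws3 : ∀ y, b ≤ y → w y ^ 2 / 2 = uR ^ 2 / 2 := by
    intro y hy
    by_cases hlt : b < y
    · simp only [hw, if_neg (not_lt.2 (le_of_lt (lt_trans hab hlt))), if_neg (not_le.2 hlt)]
    · have hy' : y = b := le_antisymm (not_lt.1 hlt) hy
      rw [hy']
      have hwb : w b = uR := by
        show (if b < a then uL else if b ≤ b then b / t else uR) = uR
        rw [if_neg (not_lt.2 hab.le), if_pos le_rfl, hb, mul_div_cancel_right₀ _ ht.ne']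
      rw [hwb]
  set N := max T (max |a| |b|) + 1 with hN
  have hTN : T < N := by
    have := le_max_left T (max |a| |b|); linarith
  have hNa : -N ≤ a := by
    have h1 : |a| ≤ N - 1 := le_trans (le_max_left _ _) (by rw [hN]; ring_nf; exact le_max_right _ _) 
    have := neg_abs_le a; linarith
  have hNb : b ≤ N := by
    have h1 : |b| ≤ N - 1 := le_trans (le_max_right _ _)
      (by rw [hN]; ring_nf; exact le_max_right _ _)
    have := le_abs_self b; linarith
  have hNpos : 0 < N := lt_trans hTpos hTN
  have hNN : -N ≤ N := by linarith
  have hd0 : ∀ y : ℝ, N ≤ |y| → deriv ψ y = 0 := fun y hy =>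
    deriv_zero_of_bound hT (lt_of_lt_of_le hTN hy)
  show (∫ y : ℝ, w y ^ 2 / 2 * deriv ψ y) = - ∫ y in Icc a b, y / t ^ 2 * ψ y
  have hzero : ∀ y : ℝ, y ∉ Ioc (-N) N → w y ^ 2 / 2 * deriv ψ y = 0 := by
    intro y hy
    rw [mem_Ioc, not_and_or, not_lt, not_le] at hy
    have : N ≤ |y| := by
      rcases hy with hy | hy
      · rw [abs_of_nonpos (by linarith)]; linarith
      · rw [abs_of_pos (by linarith)]; linarith
    rw [hd0 y this, mul_zero]
  have IcL : IntegrableOn (fun y => uL ^ 2 / 2 * deriv ψ y) (Ioc (-N) a) :=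
    (continuous_const.mul hd).integrableOn_Ioc
  have IcM : IntegrableOn (fun y => (y / t) ^ 2 / 2 * deriv ψ y) (Ioc a b) :=
    ((((continuous_id.div_const t).pow 2).div_const 2).mul hd).integrableOn_Ioc
  have IcR : IntegrableOn (fun y => uR ^ 2 / 2 * deriv ψ y) (Ioc b N) :=
    (continuous_const.mul hd).integrableOn_Ioc
  have II1 : IntervalIntegrable (fun y => w y ^ 2 / 2 * deriv ψ y) volume (-N) a := by
    rw [intervalIntegrable_iff_integrableOn_Ioc_of_le hNa]
    exact IcL.congr_fun (fun y hy => by simp only [hws1 y hy.2]) measurableSet_Ioc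
  have II2 : IntervalIntegrable (fun y => w y ^ 2 / 2 * deriv ψ y) volume a b := by
    rw [intervalIntegrable_iff_integrableOn_Ioc_of_le hab.le]
    exact IcM.congr_fun (fun y hy => by simp only [hws2 y hy.1.le hy.2]) measurableSet_Ioc
  have II3 : IntervalIntegrable (fun y => w y ^ 2 / 2 * deriv ψ y) volume b N := by
    rw [intervalIntegrable_iff_integrableOn_Ioc_of_le hNb]
    exact IcR.congr_fun (fun y hy => by simp only [hws3 y hy.1.le]) measurableSet_Ioc
  rw [← setIntegral_eq_integral_of_forall_compl_eq_zero hzero,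
    ← intervalIntegral.integral_of_le hNN,
    ← intervalIntegral.integral_add_adjacent_intervals II1 (II2.trans II3),
    ← intervalIntegral.integral_add_adjacent_intervals II2 II3]
  have hpsiN : ψ N = 0 := hT N (by rw [abs_of_pos hNpos]; exact hTN.le)
  have hpsinN : ψ (-N) = 0 := hT (-N) (by rw [abs_neg, abs_of_pos hNpos]; exact hTN.le)
  have E1 : ∫ y in (-N)..a, w y ^ 2 / 2 * deriv ψ y = uL ^ 2 / 2 * ψ a := by
    have e1 : EqOn (fun y => w y ^ 2 / 2 * deriv ψ y)
        (fun y => uL ^ 2 / 2 * deriv ψ y) (uIcc (-N) a) := by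
      intro y hy
      rw [uIcc_of_le hNa] at hy
      simp only [hws1 y hy.2]
    rw [intervalIntegral.integral_congr e1, intervalIntegral.integral_const_mul,
      intervalIntegral.integral_deriv_eq_sub (fun y _ => hdiff y) (hd.intervalIntegrable _ _),
      hpsinN, sub_zero]
  have E3 : ∫ y in b..N, w y ^ 2 / 2 * deriv ψ y = -(uR ^ 2 / 2 * ψ b) := by
    have e3 : EqOn (fun y => w y ^ 2 / 2 * deriv ψ y)
        (fun y => uR ^ 2 / 2 * deriv ψ y) (uIcc b N) := by
      intro y hy
      rw [uIcc_of_le hNb] at hy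
      simp only [hws3 y hy.1]
    rw [intervalIntegral.integral_congr e3, intervalIntegral.integral_const_mul,
      intervalIntegral.integral_deriv_eq_sub (fun y _ => hdiff y) (hd.intervalIntegrable _ _),
      hpsiN]
    ring
  have ea : a ^ 2 / (2 * t ^ 2) = uL ^ 2 / 2 := by
    rw [ha]; field_simp
  have eb : b ^ 2 / (2 * t ^ 2) = uR ^ 2 / 2 := by
    rw [hb]; field_simp
  have E2 : ∫ y in a..b, w y ^ 2 / 2 * deriv ψ y
      = (uR ^ 2 / 2 * ψ b - uL ^ 2 / 2 * ψ a) - ∫ y in a..b, y / t ^ 2 * ψ y := by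
    have e2 : EqOn (fun y => w y ^ 2 / 2 * deriv ψ y)
        (fun y => (y / t) ^ 2 / 2 * deriv ψ y) (uIcc a b) := by
      intro y hy
      rw [uIcc_of_le hab.le] at hy
      simp only [hws2 y hy.1 hy.2]
    rw [intervalIntegral.integral_congr e2]
    have key : ∫ y in a..b, (y / t ^ 2 * ψ y + (y / t) ^ 2 / 2 * deriv ψ y)
        = b ^ 2 / (2 * t ^ 2) * ψ b - a ^ 2 / (2 * t ^ 2) * ψ a := by
      apply intervalIntegral.integral_eq_sub_of_hasDerivAt
        (f := fun y => y ^ 2 / (2 * t ^ 2) * ψ y)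
      · intro y _
        have hpoly : HasDerivAt (fun y : ℝ => y ^ 2 / (2 * t ^ 2)) (y / t ^ 2) y := by
          have h2 := (hasDerivAt_pow 2 y).div_const (2 * t ^ 2)
          exact h2.congr_deriv (by push_cast; field_simp)
        have := hpoly.mul (hdiff y).hasDerivAt
        exact this.congr_deriv (by field_simp)
      · apply Continuous.intervalIntegrable
        exact ((continuous_id.div_const _).mul hcont).add
          ((((continuous_id.div_const t).pow 2).div_const 2).mul hd)
    have hiiA : IntervalIntegrable (fun y => y / t ^ 2 * ψ y) volume a b :=
      ((continuous_id.div_const _).mul hcont).intervalIntegrable _ _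
    have hiiB : IntervalIntegrable (fun y => (y / t) ^ 2 / 2 * deriv ψ y) volume a b :=
      ((((continuous_id.div_const t).pow 2).div_const 2).mul hd).intervalIntegrable _ _
    rw [intervalIntegral.integral_add hiiA hiiB, ea, eb] at key
    linarith
  rw [E1, E2, E3, integral_Icc_eq_integral_Ioc, ← intervalIntegral.integral_of_le hab.le]
  ring

lemma prod_bound {f : ℝ × ℝ → ℝ} (hc : HasCompactSupport f) :
    ∃ M : ℝ, 0 < M ∧ ∀ x t : ℝ, M ≤ |x| ∨ M ≤ |t| → f (x, t) = 0 := by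
  obtain ⟨r, hr⟩ := hc.isCompact.isBounded.subset_closedBall 0
  refine ⟨max r 0 + 1, by positivity, fun x t hxt => ?_⟩
  apply image_eq_zero_of_notMem_tsupport
  intro hm
  have h1 := hr hm
  rw [Metric.mem_closedBall, dist_zero_right, Prod.norm_def] at h1
  simp only [Real.norm_eq_abs] at h1
  have h2 : r ≤ max r 0 := le_max_left _ _
  rcases hxt with hx | ht
  · have := le_trans (le_max_left |x| |t|) h1; linarith
  · have := le_trans (le_max_right |x| |t|) h1; linarith

noncomputable def rarew (uL uR : ℝ) : ℝ → ℝ → ℝ :=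
  fun x t => if x < uL * t then uL else if x ≤ uR * t then x / t else uR

/-- A bounded measurable function `u : ℝ × (0,∞) → ℝ` (represented as `u : ℝ → ℝ → ℝ`,
`u x t`) is a weak solution of the scalar conservation law `u_t + (f(u))_x = 0` with
initial data `u₀` if for every smooth compactly supported test function `φ` one has
`∫_0^∞ ∫_ℝ (u ∂_t φ + f(u) ∂_x φ) dx dt + ∫_ℝ u₀(x) φ(x,0) dx = 0`. -/
def IsWeakSolution (f : ℝ → ℝ) (u : ℝ → ℝ → ℝ) (u₀ : ℝ → ℝ) : Prop :=
  ∀ φ : ℝ → ℝ → ℝ,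
    ContDiff ℝ (⊤ : ℕ∞) (fun p : ℝ × ℝ => φ p.1 p.2) →
    HasCompactSupport (fun p : ℝ × ℝ => φ p.1 p.2) →
    (∫ t in Ioi (0 : ℝ), ∫ x : ℝ,
        (u x t * deriv (fun s => φ x s) t + f (u x t) * deriv (fun y => φ y t) x))
      + ∫ x : ℝ, u₀ x * φ x 0 = 0

set_option maxHeartbeats 4000000 in
/-- For `u_L < u_R`, the rarefaction wave is a weak solution of the inviscid Burgers
equation `u_t + (u²/2)_x = 0` with Riemann initial data. -/
theorem rarefaction_isWeakSolution_burgers (uL uR : ℝ) (h : uL < uR) :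
    IsWeakSolution (fun v => v ^ 2 / 2)
      (fun x t => if x < uL * t then uL else if x ≤ uR * t then x / t else uR)
      (fun x => if x ≤ 0 then uL else uR) := by
  show IsWeakSolution (fun v => v ^ 2 / 2) (rarew uL uR)
    (fun x => if x ≤ 0 then uL else uR)
  intro φ hφ hsupp
  have hFc : Continuous fun p : ℝ × ℝ => φ p.1 p.2 := hφ.continuous
  obtain ⟨Cφ, hCφ⟩ : ∃ C, ∀ p : ℝ × ℝ, ‖φ p.1 p.2‖ ≤ C :=
    hFc.bounded_above_of_compact_support hsupp
  obtain ⟨M, hMpos, hM⟩ : ∃ M : ℝ, 0 < M ∧ ∀ x t : ℝ, M ≤ |x| ∨ M ≤ |t| → φ x t = 0 :=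
    prod_bound hsupp
  have hslt : ∀ x : ℝ, ContDiff ℝ (⊤ : ℕ∞) (fun s => φ x s) := fun x =>
    hφ.comp ((contDiff_const (c := x)).prodMk contDiff_id)
  have hsltc : ∀ x : ℝ, HasCompactSupport (fun s => φ x s) := by
    intro x
    refine HasCompactSupport.intro (isCompact_Icc (a := -M) (b := M)) fun s hs => ?_
    rw [mem_Icc, not_and_or, not_le, not_le] at hs
    refine hM x s (Or.inr ?_)
    rcases hs with hs | hs
    · rw [abs_of_neg (by linarith)]; linarith
    · rw [abs_of_pos (by linarith)]; linarith
  have hslx : ∀ t : ℝ, ContDiff ℝ (⊤ : ℕ∞) (fun y => φ y t) := fun t =>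
    hφ.comp (contDiff_id.prodMk (contDiff_const (c := t)))
  have hslxc : ∀ t : ℝ, HasCompactSupport (fun y => φ y t) := by
    intro t
    refine HasCompactSupport.intro (isCompact_Icc (a := -M) (b := M)) fun y hy => ?_
    rw [mem_Icc, not_and_or, not_le, not_le] at hy
    refine hM y t (Or.inl ?_)
    rcases hy with hy | hy
    · rw [abs_of_neg (by linarith)]; linarith
    · rw [abs_of_pos (by linarith)]; linarith
  set φt : ℝ × ℝ → ℝ := fun p => fderiv ℝ (fun p : ℝ × ℝ => φ p.1 p.2) p (0, 1) with hφtdef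
  set φX : ℝ × ℝ → ℝ := fun p => fderiv ℝ (fun p : ℝ × ℝ => φ p.1 p.2) p (1, 0) with hφxdef
  have hφtc : Continuous φt := (hφ.continuous_fderiv (by simp)).clm_apply continuous_const
  have hφxc : Continuous φX := (hφ.continuous_fderiv (by simp)).clm_apply continuous_const
  have hφts : HasCompactSupport φt :=
    (hsupp.fderiv ℝ).comp_left (g := fun L : ℝ × ℝ →L[ℝ] ℝ => L (0, 1)) rfl
  have hφxs : HasCompactSupport φX :=
    (hsupp.fderiv ℝ).comp_left (g := fun L : ℝ × ℝ →L[ℝ] ℝ => L (1, 0)) rfl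
  have hdt : ∀ x t : ℝ, deriv (fun s => φ x s) t = φt (x, t) := by
    intro x t
    have hF : HasFDerivAt (fun p : ℝ × ℝ => φ p.1 p.2)
        (fderiv ℝ (fun p : ℝ × ℝ => φ p.1 p.2) (x, t)) (x, t) :=
      ((hφ.differentiable (by simp)) (x, t)).hasFDerivAt
    have hcurve : HasDerivAt (fun s : ℝ => ((x, s) : ℝ × ℝ)) ((0 : ℝ), (1 : ℝ)) t :=
      (hasDerivAt_const t x).prodMk (hasDerivAt_id t)
    exact (hF.comp_hasDerivAt t hcurve).deriv
  have hdx : ∀ x t : ℝ, deriv (fun y => φ y t) x = φX (x, t) := by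
    intro x t
    have hF : HasFDerivAt (fun p : ℝ × ℝ => φ p.1 p.2)
        (fderiv ℝ (fun p : ℝ × ℝ => φ p.1 p.2) (x, t)) (x, t) :=
      ((hφ.differentiable (by simp)) (x, t)).hasFDerivAt
    have hcurve : HasDerivAt (fun y : ℝ => ((y, t) : ℝ × ℝ)) ((1 : ℝ), (0 : ℝ)) x :=
      (hasDerivAt_id x).prodMk (hasDerivAt_const x t)
    exact (hF.comp_hasDerivAt x hcurve).deriv
  set KK : ℝ → ℝ → ℝ :=
    fun x t => (Icc (uL * t) (uR * t)).indicator (fun y => y / t ^ 2 * φ y t) x with hKK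
  have hCm : (0:ℝ) ≤ max |uL| |uR| := le_trans (abs_nonneg uL) (le_max_left _ _)
  have hubdd : ∀ x t : ℝ, |rarew uL uR x t| ≤ max |uL| |uR| := by
    intro x t
    simp only [rarew]
    by_cases h1 : x < uL * t
    · rw [if_pos h1]; exact le_max_left _ _
    · rw [if_neg h1]
      by_cases h2 : x ≤ uR * t
      · rw [if_pos h2]
        have huLx : uL * t ≤ x := not_lt.1 h1
        rcases lt_trichotomy t 0 with ht | ht | ht
        · exfalso
          have : uR * t < uL * t := by nlinarith
          linarith
        · subst ht; rw [div_zero]; simpa using hCm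
        · have hL : uL ≤ x / t := (le_div_iff₀ ht).2 (by linarith [huLx])
          have hR : x / t ≤ uR := (div_le_iff₀ ht).2 (by linarith [h2])
          rw [abs_le]
          constructor
          · have h3 := neg_abs_le uL
            have h4 := le_max_left |uL| |uR|
            linarith
          · have h3 := le_abs_self uR
            have h4 := le_max_right |uL| |uR|
            linarith
      · rw [if_neg h2]; exact le_max_right _ _
  have hum : Measurable fun p : ℝ × ℝ => rarew uL uR p.1 p.2 := by
    simp only [rarew]
    exact Measurable.ite (measurableSet_lt measurable_fst (measurable_const.mul measurable_snd))
      measurable_const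
      (Measurable.ite (measurableSet_le measurable_fst (measurable_const.mul measurable_snd))
        (measurable_fst.div measurable_snd) measurable_const)
  obtain ⟨Mt, hMtpos, hMt⟩ := prod_bound hφts
  obtain ⟨Mx, hMxpos, hMx⟩ := prod_bound hφxs
  have hsliceφt : ∀ t : ℝ, Integrable (fun x => φt (x, t)) := by
    intro t
    refine (hφtc.comp (continuous_id.prodMk continuous_const)).integrable_of_hasCompactSupport ?_
    refine HasCompactSupport.intro (isCompact_Icc (a := -Mt) (b := Mt)) fun y hy => ?_
    rw [mem_Icc, not_and_or, not_le, not_le] at hy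
    refine hMt y t (Or.inl ?_)
    rcases hy with hy | hy
    · rw [abs_of_neg (by linarith)]; linarith
    · rw [abs_of_pos (by linarith)]; linarith
  have hsliceφx : ∀ t : ℝ, Integrable (fun x => φX (x, t)) := by
    intro t
    refine (hφxc.comp (continuous_id.prodMk continuous_const)).integrable_of_hasCompactSupport ?_
    refine HasCompactSupport.intro (isCompact_Icc (a := -Mx) (b := Mx)) fun y hy => ?_
    rw [mem_Icc, not_and_or, not_le, not_le] at hy
    refine hMx y t (Or.inl ?_)
    rcases hy with hy | hy
    · rw [abs_of_neg (by linarith)]; linarith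
    · rw [abs_of_pos (by linarith)]; linarith
  have humx : ∀ t : ℝ, Measurable fun x : ℝ => rarew uL uR x t := fun t =>
    hum.comp (measurable_id.prodMk measurable_const)
  have IA : ∀ t : ℝ, Integrable (fun x => rarew uL uR x t * φt (x, t)) := fun t =>
    Integrable.bdd_mul (hsliceφt t) (humx t).aestronglyMeasurable
      (Eventually.of_forall fun x => by rw [Real.norm_eq_abs]; exact hubdd x t)
  have IB : ∀ t : ℝ, Integrable (fun x => rarew uL uR x t ^ 2 / 2 * φX (x, t)) := by
    intro t
    refine Integrable.bdd_mul (hsliceφx t)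
      ((((humx t).pow_const 2).div_const 2).aestronglyMeasurable)
      (c := (max |uL| |uR|) ^ 2 / 2) (Eventually.of_forall fun x => ?_)
    have h1 : |rarew uL uR x t| ^ 2 ≤ (max |uL| |uR|) ^ 2 :=
      pow_le_pow_left₀ (abs_nonneg _) (hubdd x t) 2
    rw [Real.norm_eq_abs, abs_of_nonneg (by positivity), ← sq_abs]
    linarith
  have IK : ∀ t ∈ Ioi (0:ℝ), Integrable (fun x => KK x t) := by
    intro t _
    simp only [hKK]
    refine (integrable_indicator_iff measurableSet_Icc).2 ?_
    exact ((continuous_id.div_const _).mul (hslx t).continuous).integrableOn_Icc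
  have stepA : ∀ t ∈ Ioi (0:ℝ),
      (∫ x : ℝ, rarew uL uR x t ^ 2 / 2 * φX (x, t)) = - ∫ x : ℝ, KK x t := by
    intro t ht
    have h2 : (∫ x : ℝ, KK x t) = ∫ y in Icc (uL * t) (uR * t), y / t ^ 2 * φ y t := by
      simp only [hKK]
      exact integral_indicator measurableSet_Icc
    have h3 : (fun x : ℝ => rarew uL uR x t ^ 2 / 2 * φX (x, t))
        = fun x : ℝ => (if x < uL * t then uL else if x ≤ uR * t then x / t else uR) ^ 2 / 2
            * deriv (fun y => φ y t) x := by
      funext x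
      rw [hdx x t]
      rfl
    rw [h2, h3]
    exact ibp_x uL uR h t ht (hslx t) (hslxc t)
  have hCφ0 : (0:ℝ) ≤ Cφ := le_trans (norm_nonneg _) (hCφ (0, 0))
  have hmeq := Measure.prod_restrict (μ := (volume : Measure ℝ)) (ν := (volume : Measure ℝ))
    (Ioi 0) univ
  rw [Measure.restrict_univ] at hmeq
  have I1 : Integrable (fun p : ℝ × ℝ => rarew uL uR p.2 p.1 * φt (p.2, p.1))
      ((volume.restrict (Ioi 0)).prod volume) := by
    rw [hmeq]
    apply Integrable.restrict
    refine Integrable.bdd_mul ?_ (hum.comp measurable_swap).aestronglyMeasurable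
      (Eventually.of_forall fun p => by rw [Real.norm_eq_abs]; exact hubdd p.2 p.1)
    exact (hφtc.comp continuous_swap).integrable_of_hasCompactSupport
      (hφts.comp_homeomorph (Homeomorph.prodComm ℝ ℝ))
  have hKmeas : Measurable fun p : ℝ × ℝ => KK p.2 p.1 := by
    simp only [hKK]
    have hrw : (fun p : ℝ × ℝ => (Icc (uL * p.1) (uR * p.1)).indicator
        (fun y => y / p.1 ^ 2 * φ y p.1) p.2)
        = fun p : ℝ × ℝ => if uL * p.1 ≤ p.2 ∧ p.2 ≤ uR * p.1
            then p.2 / p.1 ^ 2 * φ p.2 p.1 else 0 := by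
      funext p
      rw [indicator_apply]
      by_cases hp : p.2 ∈ Icc (uL * p.1) (uR * p.1)
      · rw [if_pos hp, if_pos (mem_Icc.1 hp)]
      · rw [if_neg hp, if_neg (fun hc => hp (mem_Icc.2 hc))]
    rw [hrw]
    refine Measurable.ite ?_ ?_ measurable_const
    · exact ((measurableSet_le (measurable_const.mul measurable_fst) measurable_snd).inter
        (measurableSet_le measurable_snd (measurable_const.mul measurable_fst)))
    · exact (measurable_snd.div (measurable_fst.pow_const 2)).mul
        ((hFc.measurable).comp measurable_swap)
  have I2 : Integrable (fun p : ℝ × ℝ => KK p.2 p.1)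
      ((volume.restrict (Ioi 0)).prod volume) := by
    have AESM : AEStronglyMeasurable (fun p : ℝ × ℝ => KK p.2 p.1)
        ((volume.restrict (Ioi 0)).prod volume) := hKmeas.aestronglyMeasurable
    refine (integrable_prod_iff AESM).2 ⟨?_, ?_⟩
    · filter_upwards [ae_restrict_mem measurableSet_Ioi] with t ht
      exact IK t ht
    · refine Integrable.mono'
        (g := (Ioc (0:ℝ) M).indicator fun _ => (uR - uL) * (max |uL| |uR| * Cφ)) ?_
        (AESM.norm.integral_prod_right') ?_
      · refine (integrable_indicator_iff measurableSet_Ioc).2 ?_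
        refine integrableOn_const (ne_of_lt ?_)
        rw [Measure.restrict_apply measurableSet_Ioc]
        exact lt_of_le_of_lt (measure_mono inter_subset_left) measure_Ioc_lt_top
      · filter_upwards [ae_restrict_mem measurableSet_Ioi] with t ht
        rw [Real.norm_eq_abs, abs_of_nonneg (integral_nonneg fun x => norm_nonneg _)]
        by_cases hTM : t ≤ M
        · have hmem : t ∈ Ioc (0:ℝ) M := ⟨ht, hTM⟩
          rw [indicator_of_mem hmem]
          have h1 : (fun x => ‖KK x t‖)
              = fun x => (Icc (uL * t) (uR * t)).indicator (fun y => ‖y / t ^ 2 * φ y t‖) x := by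
            funext x
            simp only [hKK]
            exact norm_indicator_eq_indicator_norm _ _
          rw [h1, integral_indicator measurableSet_Icc]
          have htpos : (0:ℝ) < t := ht
          have hb : ∀ y ∈ Icc (uL * t) (uR * t),
              ‖‖y / t ^ 2 * φ y t‖‖ ≤ (max |uL| |uR| * Cφ) / t := by
            intro y hy
            rw [norm_norm, Real.norm_eq_abs, abs_mul, abs_div, abs_of_pos (pow_pos htpos 2)]
            have hy1 : |y| ≤ max |uL| |uR| * t := by
              rw [abs_le]
              constructor
              · have h5 : -(|uL| * t) ≤ uL * t := by
                  have := neg_abs_le uL; nlinarith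
                have h6 : |uL| * t ≤ max |uL| |uR| * t := by
                  have := le_max_left |uL| |uR|; nlinarith
                have := hy.1; linarith
              · have h5 : uR * t ≤ |uR| * t := by
                  have := le_abs_self uR; nlinarith
                have h6 : |uR| * t ≤ max |uL| |uR| * t := by
                  have := le_max_right |uL| |uR|; nlinarith
                have := hy.2; linarith
            have hy2 : |φ y t| ≤ Cφ := by
              have := hCφ (y, t); rwa [Real.norm_eq_abs] at this
            calc |y| / t ^ 2 * |φ y t| ≤ (max |uL| |uR| * t) / t ^ 2 * Cφ := by
                  gcongr
              _ = (max |uL| |uR| * Cφ) / t := by field_simp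
          have hfin : volume (Icc (uL * t) (uR * t)) < ⊤ := measure_Icc_lt_top
          have hAE : AEStronglyMeasurable (fun y => ‖y / t ^ 2 * φ y t‖)
              (volume.restrict (Icc (uL * t) (uR * t))) :=
            (((continuous_id.div_const _).mul (hslx t).continuous).norm).aestronglyMeasurable.restrict
          have hest := norm_setIntegral_le_of_norm_le_const hfin hb
          have hle : (∫ x in Icc (uL * t) (uR * t), ‖x / t ^ 2 * φ x t‖)
              ≤ max |uL| |uR| * Cφ / t * (volume (Icc (uL * t) (uR * t))).toReal :=
            le_trans (le_abs_self _) hest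
          refine le_trans hle ?_
          rw [Real.volume_Icc, ENNReal.toReal_ofReal (by nlinarith : (0:ℝ) ≤ uR * t - uL * t)]
          have heq9 : max |uL| |uR| * Cφ / t * (uR * t - uL * t)
              = (uR - uL) * (max |uL| |uR| * Cφ) := by
            field_simp
          rw [heq9]
        · rw [indicator_of_notMem (fun hc => hTM hc.2)]
          have hzero : ∀ x : ℝ, KK x t = 0 := by
            intro x
            simp only [hKK]
            have : (fun y : ℝ => y / t ^ 2 * φ y t) = fun _ => (0:ℝ) := by
              funext y
              rw [hM y t (Or.inr (by rw [abs_of_pos ht]; linarith)), mul_zero]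
            rw [this]
            simp
          simp only [hzero, norm_zero]
          simp

  have stepB : ∀ x : ℝ, x ≠ 0 →
      (∫ t in Ioi (0:ℝ), rarew uL uR x t * deriv (fun s => φ x s) t)
        = -((if x ≤ 0 then uL else uR) * φ x 0) + ∫ t in Ioi (0:ℝ), KK x t := by
    intro x hx
    rcases lt_or_gt_of_ne hx with hxneg | hxpos
    · -- x < 0
      rw [if_pos hxneg.le]
      by_cases huL0 : 0 ≤ uL
      · have hveq : EqOn (fun t => rarew uL uR x t * deriv (fun s => φ x s) t)
            (fun t => uL * deriv (fun s => φ x s) t) (Ioi 0) := by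
          intro t ht
          have htpos : (0:ℝ) < t := ht
          have h1 : x < uL * t := lt_of_lt_of_le hxneg (mul_nonneg huL0 htpos.le)
          simp only [rarew, if_pos h1]
        have hKeq : EqOn (fun t => KK x t) (fun _ => (0:ℝ)) (Ioi 0) := by
          intro t ht
          have htpos : (0:ℝ) < t := ht
          simp only [hKK]
          apply indicator_of_notMem
          rw [mem_Icc, not_and_or]
          exact Or.inl (not_le.2 (lt_of_lt_of_le hxneg (mul_nonneg huL0 htpos.le)))
        rw [setIntegral_congr_fun measurableSet_Ioi hveq,
          setIntegral_congr_fun measurableSet_Ioi hKeq, integral_zero, add_zero]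
        exact ibp_t0 (hslt x) (hsltc x) uL
      · push_neg at huL0
        set t₁ := x / uL with ht₁def
        have ht₁pos : 0 < t₁ := div_pos_of_neg_of_neg hxneg huL0
        have hxe : x = uL * t₁ := by
          rw [ht₁def, mul_comm, div_mul_cancel₀ _ huL0.ne]
        have hxt₁ : x / t₁ = uL := by
          rw [hxe, mul_div_cancel_right₀ _ ht₁pos.ne']
        have hv1 : ∀ t ∈ Ioc (0:ℝ) t₁, rarew uL uR x t = x / t₁ := by
          intro t ht
          rw [hxt₁]
          simp only [rarew]
          rcases lt_or_eq_of_le ht.2 with hlt | heq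
          · rw [if_pos (by nlinarith [mul_pos (sub_pos.2 hlt) (neg_pos.2 huL0)])]
          · rw [heq, if_neg (not_lt.2 (le_of_eq hxe.symm)),
              if_pos (by nlinarith [mul_pos ht₁pos (sub_pos.2 h)]), hxt₁]
        by_cases huR0 : 0 ≤ uR
        · have hv2 : ∀ t ∈ Ioi t₁, rarew uL uR x t = x / t := by
            intro t ht
            have htt : t₁ < t := ht
            have htpos : 0 < t := lt_trans ht₁pos htt
            simp only [rarew]
            rw [if_neg (not_lt.2 (by nlinarith [mul_pos (sub_pos.2 htt) (neg_pos.2 huL0)])),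
              if_pos (le_trans hxneg.le (mul_nonneg huR0 htpos.le))]
          have hres := ibp_t2 (hslt x) (hsltc x) x t₁ ht₁pos
            (fun t => rarew uL uR x t) hv1 hv2
          have hKint : ∫ t in Ioi (0:ℝ), KK x t = ∫ t in Ioi t₁, x / t ^ 2 * φ x t := by
            have hKcong : EqOn (fun t => KK x t)
                (fun t => (Ici t₁).indicator (fun s => x / s ^ 2 * φ x s) t) (Ioi 0) := by
              intro t ht
              have htpos : (0:ℝ) < t := ht
              simp only [hKK]
              by_cases hmem : t₁ ≤ t
              · have hmemI : t ∈ Ici t₁ := hmem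
                rw [indicator_of_mem hmemI, indicator_of_mem (mem_Icc.2
                  ⟨by nlinarith [mul_nonneg (sub_nonneg.2 hmem) (neg_pos.2 huL0).le],
                   le_trans hxneg.le (mul_nonneg huR0 htpos.le)⟩)]
              · have hmemI : t ∉ Ici t₁ := hmem
                rw [indicator_of_notMem hmemI, indicator_of_notMem ?_]
                intro hc
                apply hmem
                by_contra hcc
                push_neg at hcc
                exact absurd hc.1 (not_le.2 (by
                  nlinarith [mul_pos (sub_pos.2 hcc) (neg_pos.2 huL0)]))
            rw [setIntegral_congr_fun measurableSet_Ioi hKcong,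
              setIntegral_indicator measurableSet_Ici,
              inter_eq_self_of_subset_right (show Ici t₁ ⊆ Ioi 0 from fun s hs => lt_of_lt_of_le ht₁pos hs),
              integral_Ici_eq_integral_Ioi]
          calc (∫ t in Ioi (0:ℝ), rarew uL uR x t * deriv (fun s => φ x s) t)
              = -(x / t₁ * φ x 0) + ∫ t in Ioi t₁, x / t ^ 2 * φ x t := hres
            _ = -(uL * φ x 0) + ∫ t in Ioi (0:ℝ), KK x t := by rw [hxt₁, hKint]
        · push_neg at huR0
          set t₂ := x / uR with ht₂def
          have ht₂pos : 0 < t₂ := div_pos_of_neg_of_neg hxneg huR0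
          have hxe2 : x = uR * t₂ := by
            rw [ht₂def, mul_comm, div_mul_cancel₀ _ huR0.ne]
          have hxt₂ : x / t₂ = uR := by
            rw [hxe2, mul_div_cancel_right₀ _ ht₂pos.ne']
          have h12 : t₁ ≤ t₂ := by
            by_contra hcon
            push_neg at hcon
            nlinarith [mul_pos (sub_pos.2 hcon) (neg_pos.2 huL0),
              mul_pos ht₂pos (sub_pos.2 h)]
          have hv2 : ∀ t ∈ Ioc t₁ t₂, rarew uL uR x t = x / t := by
            intro t ht
            simp only [rarew]
            rw [if_neg (not_lt.2 (by
                nlinarith [mul_pos (sub_pos.2 ht.1) (neg_pos.2 huL0)])),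
              if_pos (by nlinarith [mul_nonneg (sub_nonneg.2 ht.2) (neg_pos.2 huR0).le])]
          have hv3 : ∀ t ∈ Ioi t₂, rarew uL uR x t = x / t₂ := by
            intro t ht
            have htt : t₂ < t := ht
            simp only [rarew]
            rw [if_neg (not_lt.2 (by
                nlinarith [mul_pos (sub_pos.2 (lt_of_le_of_lt h12 htt)) (neg_pos.2 huL0)])),
              if_neg (not_le.2 (by nlinarith [mul_pos (sub_pos.2 htt) (neg_pos.2 huR0)])),
              hxt₂]
          have hres := ibp_t3 (hslt x) (hsltc x) x t₁ t₂ ht₁pos h12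
            (fun t => rarew uL uR x t) hv1 hv2 hv3
          have hKint : ∫ t in Ioi (0:ℝ), KK x t = ∫ t in Ioc t₁ t₂, x / t ^ 2 * φ x t := by
            have hKcong : EqOn (fun t => KK x t)
                (fun t => (Icc t₁ t₂).indicator (fun s => x / s ^ 2 * φ x s) t) (Ioi 0) := by
              intro t ht
              simp only [hKK]
              by_cases hmem : t ∈ Icc t₁ t₂
              · rw [indicator_of_mem hmem, indicator_of_mem (mem_Icc.2
                  ⟨by nlinarith [mul_nonneg (sub_nonneg.2 hmem.1) (neg_pos.2 huL0).le],
                   by nlinarith [mul_nonneg (sub_nonneg.2 hmem.2) (neg_pos.2 huR0).le]⟩)]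
              · rw [indicator_of_notMem hmem, indicator_of_notMem ?_]
                intro hc
                apply hmem
                rw [mem_Icc] at hc ⊢
                constructor
                · by_contra hcc
                  push_neg at hcc
                  nlinarith [mul_pos (sub_pos.2 hcc) (neg_pos.2 huL0), hc.1]
                · by_contra hcc
                  push_neg at hcc
                  nlinarith [mul_pos (sub_pos.2 hcc) (neg_pos.2 huR0), hc.2]
            rw [setIntegral_congr_fun measurableSet_Ioi hKcong,
              setIntegral_indicator measurableSet_Icc,
              inter_eq_self_of_subset_right
                (show Icc t₁ t₂ ⊆ Ioi 0 from fun s hs => lt_of_lt_of_le ht₁pos hs.1),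
              integral_Icc_eq_integral_Ioc]
          calc (∫ t in Ioi (0:ℝ), rarew uL uR x t * deriv (fun s => φ x s) t)
              = -(x / t₁ * φ x 0) + ∫ t in Ioc t₁ t₂, x / t ^ 2 * φ x t := hres
            _ = -(uL * φ x 0) + ∫ t in Ioi (0:ℝ), KK x t := by rw [hxt₁, hKint]
    · -- x > 0
      rw [if_neg (not_le.2 hxpos)]
      by_cases huR0 : uR ≤ 0
      · have huL0 : uL < 0 := lt_of_lt_of_le h huR0
        have hveq : EqOn (fun t => rarew uL uR x t * deriv (fun s => φ x s) t)
            (fun t => uR * deriv (fun s => φ x s) t) (Ioi 0) := by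
          intro t ht
          have htpos : (0:ℝ) < t := ht
          simp only [rarew]
          rw [if_neg (not_lt.2 (by nlinarith [mul_pos (neg_pos.2 huL0) htpos])),
            if_neg (not_le.2 (by nlinarith [mul_nonneg (neg_nonneg.2 huR0) htpos.le]))]
        have hKeq : EqOn (fun t => KK x t) (fun _ => (0:ℝ)) (Ioi 0) := by
          intro t ht
          have htpos : (0:ℝ) < t := ht
          simp only [hKK]
          apply indicator_of_notMem
          rw [mem_Icc, not_and_or]
          exact Or.inr (not_le.2 (by nlinarith [mul_nonneg (neg_nonneg.2 huR0) htpos.le]))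
        rw [setIntegral_congr_fun measurableSet_Ioi hveq,
          setIntegral_congr_fun measurableSet_Ioi hKeq, integral_zero, add_zero]
        exact ibp_t0 (hslt x) (hsltc x) uR
      · push_neg at huR0
        set t₁ := x / uR with ht₁def
        have ht₁pos : 0 < t₁ := div_pos hxpos huR0
        have hxe : x = uR * t₁ := by
          rw [ht₁def, mul_comm, div_mul_cancel₀ _ huR0.ne']
        have hxt₁ : x / t₁ = uR := by
          rw [hxe, mul_div_cancel_right₀ _ ht₁pos.ne']
        have hv1 : ∀ t ∈ Ioc (0:ℝ) t₁, rarew uL uR x t = x / t₁ := by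
          intro t ht
          have htpos : 0 < t := ht.1
          rw [hxt₁]
          simp only [rarew]
          rcases lt_or_eq_of_le ht.2 with hlt | heq
          · have ha1 : ¬ x < uL * t := not_lt.2 (by
              nlinarith [mul_pos htpos (sub_pos.2 h), mul_pos huR0 (sub_pos.2 hlt)])
            have ha2 : ¬ x ≤ uR * t := not_le.2 (by
              nlinarith [mul_pos huR0 (sub_pos.2 hlt)])
            rw [if_neg ha1, if_neg ha2]
          · rw [heq, if_neg (not_lt.2 (by nlinarith [mul_pos ht₁pos (sub_pos.2 h)])),
              if_pos (le_of_eq hxe), hxt₁]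
        by_cases huL0 : uL ≤ 0
        · have hv2 : ∀ t ∈ Ioi t₁, rarew uL uR x t = x / t := by
            intro t ht
            have htt : t₁ < t := ht
            have htpos : 0 < t := lt_trans ht₁pos htt
            simp only [rarew]
            rw [if_neg (not_lt.2 (by nlinarith [mul_nonneg (neg_nonneg.2 huL0) htpos.le])),
              if_pos (by nlinarith [mul_pos huR0 (sub_pos.2 htt)])]
          have hres := ibp_t2 (hslt x) (hsltc x) x t₁ ht₁pos
            (fun t => rarew uL uR x t) hv1 hv2
          have hKint : ∫ t in Ioi (0:ℝ), KK x t = ∫ t in Ioi t₁, x / t ^ 2 * φ x t := by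
            have hKcong : EqOn (fun t => KK x t)
                (fun t => (Ici t₁).indicator (fun s => x / s ^ 2 * φ x s) t) (Ioi 0) := by
              intro t ht
              have htpos : (0:ℝ) < t := ht
              simp only [hKK]
              by_cases hmem : t₁ ≤ t
              · have hmemI : t ∈ Ici t₁ := hmem
                rw [indicator_of_mem hmemI, indicator_of_mem (mem_Icc.2
                  ⟨by nlinarith [mul_nonneg (neg_nonneg.2 huL0) htpos.le],
                   by nlinarith [mul_nonneg huR0.le (sub_nonneg.2 hmem)]⟩)]
              · have hmemI : t ∉ Ici t₁ := hmem
                rw [indicator_of_notMem hmemI, indicator_of_notMem ?_]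
                intro hc
                apply hmem
                by_contra hcc
                push_neg at hcc
                exact absurd hc.2 (not_le.2 (by
                  nlinarith [mul_pos huR0 (sub_pos.2 hcc)]))
            rw [setIntegral_congr_fun measurableSet_Ioi hKcong,
              setIntegral_indicator measurableSet_Ici,
              inter_eq_self_of_subset_right (show Ici t₁ ⊆ Ioi 0 from fun s hs => lt_of_lt_of_le ht₁pos hs),
              integral_Ici_eq_integral_Ioi]
          calc (∫ t in Ioi (0:ℝ), rarew uL uR x t * deriv (fun s => φ x s) t)
              = -(x / t₁ * φ x 0) + ∫ t in Ioi t₁, x / t ^ 2 * φ x t := hres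
            _ = -(uR * φ x 0) + ∫ t in Ioi (0:ℝ), KK x t := by rw [hxt₁, hKint]
        · push_neg at huL0
          set t₂ := x / uL with ht₂def
          have ht₂pos : 0 < t₂ := div_pos hxpos huL0
          have hxe2 : x = uL * t₂ := by
            rw [ht₂def, mul_comm, div_mul_cancel₀ _ huL0.ne']
          have hxt₂ : x / t₂ = uL := by
            rw [hxe2, mul_div_cancel_right₀ _ ht₂pos.ne']
          have h12 : t₁ ≤ t₂ := by
            by_contra hcon
            push_neg at hcon
            nlinarith [mul_pos huR0 (sub_pos.2 hcon), mul_pos ht₂pos (sub_pos.2 h)]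
          have hv2 : ∀ t ∈ Ioc t₁ t₂, rarew uL uR x t = x / t := by
            intro t ht
            simp only [rarew]
            rw [if_neg (not_lt.2 (by nlinarith [mul_nonneg huL0.le (sub_nonneg.2 ht.2)])),
              if_pos (by nlinarith [mul_nonneg huR0.le (sub_nonneg.2 ht.1.le)])]
          have hv3 : ∀ t ∈ Ioi t₂, rarew uL uR x t = x / t₂ := by
            intro t ht
            have htt : t₂ < t := ht
            simp only [rarew]
            rw [if_pos (by nlinarith [mul_pos huL0 (sub_pos.2 htt)]), hxt₂]
          have hres := ibp_t3 (hslt x) (hsltc x) x t₁ t₂ ht₁pos h12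
            (fun t => rarew uL uR x t) hv1 hv2 hv3
          have hKint : ∫ t in Ioi (0:ℝ), KK x t = ∫ t in Ioc t₁ t₂, x / t ^ 2 * φ x t := by
            have hKcong : EqOn (fun t => KK x t)
                (fun t => (Icc t₁ t₂).indicator (fun s => x / s ^ 2 * φ x s) t) (Ioi 0) := by
              intro t ht
              simp only [hKK]
              by_cases hmem : t ∈ Icc t₁ t₂
              · rw [indicator_of_mem hmem, indicator_of_mem (mem_Icc.2
                  ⟨by nlinarith [mul_nonneg huL0.le (sub_nonneg.2 hmem.2)],
                   by nlinarith [mul_nonneg huR0.le (sub_nonneg.2 hmem.1)]⟩)]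
              · rw [indicator_of_notMem hmem, indicator_of_notMem ?_]
                intro hc
                apply hmem
                rw [mem_Icc] at hc ⊢
                constructor
                · by_contra hcc
                  push_neg at hcc
                  nlinarith [mul_pos huR0 (sub_pos.2 hcc), hc.2]
                · by_contra hcc
                  push_neg at hcc
                  nlinarith [mul_pos huL0 (sub_pos.2 hcc), hc.1]
            rw [setIntegral_congr_fun measurableSet_Ioi hKcong,
              setIntegral_indicator measurableSet_Icc,
              inter_eq_self_of_subset_right
                (show Icc t₁ t₂ ⊆ Ioi 0 from fun s hs => lt_of_lt_of_le ht₁pos hs.1),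
              integral_Icc_eq_integral_Ioc]
          calc (∫ t in Ioi (0:ℝ), rarew uL uR x t * deriv (fun s => φ x s) t)
              = -(x / t₁ * φ x 0) + ∫ t in Ioc t₁ t₂, x / t ^ 2 * φ x t := hres
            _ = -(uR * φ x 0) + ∫ t in Ioi (0:ℝ), KK x t := by rw [hxt₁, hKint]

  have hxne : ∀ᵐ x : ℝ, x ≠ 0 := by
    refine ae_iff.2 ?_
    have hset : {x : ℝ | ¬ x ≠ 0} = {0} := by ext y; simp
    rw [hset]
    exact measure_singleton 0
  have Iu0 : Integrable (fun x : ℝ => (if x ≤ 0 then uL else uR) * φ x 0) := by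
    refine Integrable.bdd_mul
      (((hslx 0).continuous).integrable_of_hasCompactSupport (hslxc 0))
      ((Measurable.ite measurableSet_Iic measurable_const
        measurable_const).aestronglyMeasurable) (c := max |uL| |uR|) (Eventually.of_forall fun x => ?_)
    rw [Real.norm_eq_abs]
    split_ifs
    · exact le_max_left _ _
    · exact le_max_right _ _
  show (∫ t in Ioi (0:ℝ), ∫ x : ℝ, (rarew uL uR x t * deriv (fun s => φ x s) t
      + rarew uL uR x t ^ 2 / 2 * deriv (fun y => φ y t) x))
      + ∫ x : ℝ, (if x ≤ 0 then uL else uR) * φ x 0 = 0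
  have hinner : ∀ t ∈ Ioi (0:ℝ),
      (∫ x : ℝ, (rarew uL uR x t * deriv (fun s => φ x s) t
        + rarew uL uR x t ^ 2 / 2 * deriv (fun y => φ y t) x))
        = (∫ x : ℝ, rarew uL uR x t * φt (x, t)) - ∫ x : ℝ, KK x t := by
    intro t ht
    have e : (fun x : ℝ => rarew uL uR x t * deriv (fun s => φ x s) t
        + rarew uL uR x t ^ 2 / 2 * deriv (fun y => φ y t) x)
        = fun x : ℝ => rarew uL uR x t * φt (x, t) + rarew uL uR x t ^ 2 / 2 * φX (x, t) := by
      funext x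
      rw [hdt x t, hdx x t]
    rw [e, integral_add (IA t) (IB t), stepA t ht]
    ring
  have i1 : Integrable (fun t => ∫ x : ℝ, rarew uL uR x t * φt (x, t))
      (volume.restrict (Ioi 0)) := I1.integral_prod_left
  have i2 : Integrable (fun t => ∫ x : ℝ, KK x t) (volume.restrict (Ioi 0)) :=
    I2.integral_prod_left
  have houter : (∫ t in Ioi (0:ℝ), ∫ x : ℝ, (rarew uL uR x t * deriv (fun s => φ x s) t
      + rarew uL uR x t ^ 2 / 2 * deriv (fun y => φ y t) x))
      = (∫ t in Ioi (0:ℝ), ∫ x : ℝ, rarew uL uR x t * φt (x, t))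
        - ∫ t in Ioi (0:ℝ), ∫ x : ℝ, KK x t := by
    rw [setIntegral_congr_fun measurableSet_Ioi (fun t ht => hinner t ht)]
    exact integral_sub i1 i2
  have hswap1 : (∫ t in Ioi (0:ℝ), ∫ x : ℝ, rarew uL uR x t * φt (x, t))
      = ∫ x : ℝ, ∫ t in Ioi (0:ℝ), rarew uL uR x t * φt (x, t) :=
    integral_integral_swap (f := fun t x => rarew uL uR x t * φt (x, t)) I1
  have hswap2 : (∫ t in Ioi (0:ℝ), ∫ x : ℝ, KK x t)
      = ∫ x : ℝ, ∫ t in Ioi (0:ℝ), KK x t :=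
    integral_integral_swap (f := fun t x => KK x t) I2
  have hxcong : (∫ x : ℝ, ∫ t in Ioi (0:ℝ), rarew uL uR x t * φt (x, t))
      = ∫ x : ℝ, (-((if x ≤ 0 then uL else uR) * φ x 0) + ∫ t in Ioi (0:ℝ), KK x t) := by
    apply integral_congr_ae
    filter_upwards [hxne] with x hx
    have e : (fun t => rarew uL uR x t * φt (x, t))
        = fun t => rarew uL uR x t * deriv (fun s => φ x s) t := by
      funext t
      rw [hdt x t]
    rw [e]
    exact stepB x hx
  have hsplit2 : (∫ x : ℝ, (-((if x ≤ 0 then uL else uR) * φ x 0)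
      + ∫ t in Ioi (0:ℝ), KK x t))
      = -(∫ x : ℝ, (if x ≤ 0 then uL else uR) * φ x 0)
        + ∫ x : ℝ, ∫ t in Ioi (0:ℝ), KK x t := by
    have hIneg : Integrable (fun x : ℝ => -((if x ≤ 0 then uL else uR) * φ x 0)) := Iu0.neg
    have hIK : Integrable (fun x : ℝ => ∫ t in Ioi (0:ℝ), KK x t) := I2.integral_prod_right
    rw [integral_add hIneg hIK, integral_neg]
  rw [houter, hswap1, hxcong, hsplit2, hswap2]
  ring
end

section
/- Define u : ℝ × (0, 1/2) → ℝ by u(x,t) = 1 if x < t, u(x,t) = (1 − 2x)/(1 − 2t) if t ≤ x ≤ 1/2, and u(x,t) = 0 if x > 1/2, and define u₀ : ℝ → ℝ by u₀(x) = 1 for x < 0, u₀(x) = 1 − 2x for 0 ≤ x ≤ 1/2, and u₀(x) = 0 for x > 1/2. Then u is continuous on ℝ × (0, 1/2) and is a weak solution of the inviscid Burgers equation u_t + (u²/2)_x = 0 on the time strip (0, 1/2) with initial data u₀; that is, for every smooth test function φ : ℝ × ℝ → ℝ with compact support contained in ℝ × (−∞, 1/2), one has ∫_0^{1/2} ∫_ℝ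 ( u·∂_t φ + (u²/2)·∂_x φ ) dx dt + ∫_ℝ u₀(x)·φ(x,0) dx = 0. -/
set_option maxHeartbeats 1000000

open MeasureTheory Set

noncomputable def UU (x t : ℝ) : ℝ :=
  if x < t then 1 else if x ≤ 1 / 2 then (1 - 2 * x) / (1 - 2 * t) else 0

noncomputable def UUt (x t : ℝ) : ℝ :=
  if t < x ∧ x ≤ 1 / 2 then 2 * (1 - 2 * x) / (1 - 2 * t) ^ 2 else 0

lemma UU_eq_clamp (x t : ℝ) (ht : t < 1 / 2) :
    UU x t = max 0 (min 1 ((1 - 2 * x) / (1 - 2 * t))) := by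
  have h2t : (0:ℝ) < 1 - 2 * t := by linarith
  unfold UU
  split_ifs with h1 h2
  · have : (1:ℝ) ≤ (1 - 2 * x) / (1 - 2 * t) := (one_le_div h2t).2 (by linarith)
    rw [min_eq_left this, max_eq_right (by norm_num)]
  · have h0 : (0:ℝ) ≤ (1 - 2 * x) / (1 - 2 * t) := div_nonneg (by linarith) h2t.le
    have h1' : (1 - 2 * x) / (1 - 2 * t) ≤ 1 := (div_le_one h2t).2 (by linarith)
    rw [min_eq_right h1', max_eq_right h0]
  · have : (1 - 2 * x) / (1 - 2 * t) ≤ 0 := div_nonpos_of_nonpos_of_nonneg (by linarith) h2t.le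
    rw [min_eq_right (this.trans (by norm_num)), max_eq_left this]

lemma UU_mem (x t : ℝ) (ht : t < 1 / 2) : UU x t ∈ Icc (0:ℝ) 1 := by
  rw [UU_eq_clamp x t ht]
  constructor
  · exact le_max_left _ _
  · exact max_le (by norm_num) (min_le_left _ _)

lemma UU_measurable : Measurable fun p : ℝ × ℝ => UU p.1 p.2 := by
  unfold UU
  refine Measurable.ite (measurableSet_lt measurable_fst measurable_snd) measurable_const ?_
  refine Measurable.ite (measurableSet_le measurable_fst measurable_const) ?_ measurable_const
  exact ((measurable_const.sub (measurable_fst.const_mul 2)).div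
    (measurable_const.sub (measurable_snd.const_mul 2)))

lemma UU_continuousOn : ContinuousOn (fun p : ℝ × ℝ => UU p.1 p.2) {p : ℝ × ℝ | p.2 < 1 / 2} := by
  have hdiv : ContinuousOn (fun p : ℝ × ℝ => (1 - 2 * p.1) / (1 - 2 * p.2))
      {p : ℝ × ℝ | p.2 < 1 / 2} := by
    refine ContinuousOn.div (by fun_prop) (by fun_prop) ?_
    intro p hp
    have : p.2 < 1/2 := hp
    intro h; nlinarith [h]
  have h2 : ContinuousOn (fun p : ℝ × ℝ => 0 ⊔ (1 ⊓ ((1 - 2 * p.1) / (1 - 2 * p.2))))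
      {p : ℝ × ℝ | p.2 < 1 / 2} := continuousOn_const.sup (continuousOn_const.inf hdiv)
  exact ContinuousOn.congr h2 (fun p hp => UU_eq_clamp p.1 p.2 hp)
open MeasureTheory Set

lemma integrable_of_bounded_support {f : ℝ → ℝ} (hm : AEStronglyMeasurable f volume)
    {S M : ℝ} (hS : 0 ≤ S) (hb : ∀ x, |f x| ≤ M) (h0 : ∀ x, S < |x| → f x = 0) :
    Integrable f := by
  refine Integrable.mono' (g := (Icc (-S) S).indicator fun _ => M) ?_ hm ?_
  · exact (integrable_indicator_iff measurableSet_Icc).2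
      (integrableOn_const measure_Icc_lt_top.ne)
  · filter_upwards with x
    by_cases hx : x ∈ Icc (-S) S
    · rw [indicator_of_mem hx]; simpa [Real.norm_eq_abs] using hb x
    · rw [indicator_of_notMem hx]
      have hax : S < |x| := by
        simp only [mem_Icc, not_and_or, not_le] at hx
        rcases hx with h | h
        · exact lt_abs.2 (Or.inr (by linarith))
        · exact lt_abs.2 (Or.inl h)
      simp [Real.norm_eq_abs, h0 x hax]

section phi
variable {φ : ℝ → ℝ → ℝ}

lemma phi_hasDerivAt_t (hφ : ContDiff ℝ (⊤ : ℕ∞) fun p : ℝ × ℝ => φ p.1 p.2) (x t : ℝ) :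
    HasDerivAt (fun s => φ x s)
      (fderiv ℝ (fun p : ℝ × ℝ => φ p.1 p.2) (x, t) (0, 1)) t := by
  have h := (hφ.differentiable (by simp) (x, t)).hasFDerivAt
  have hc : HasDerivAt (fun s : ℝ => ((x, s) : ℝ × ℝ)) (0, 1) t :=
    (hasDerivAt_const t x).prodMk (hasDerivAt_id t)
  exact h.comp_hasDerivAt t hc

lemma phi_hasDerivAt_x (hφ : ContDiff ℝ (⊤ : ℕ∞) fun p : ℝ × ℝ => φ p.1 p.2) (x t : ℝ) :
    HasDerivAt (fun y => φ y t)
      (fderiv ℝ (fun p : ℝ × ℝ => φ p.1 p.2) (x, t) (1, 0)) x := by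
  have h := (hφ.differentiable (by simp) (x, t)).hasFDerivAt
  have hc : HasDerivAt (fun y : ℝ => ((y, t) : ℝ × ℝ)) (1, 0) x :=
    (hasDerivAt_id x).prodMk (hasDerivAt_const x t)
  exact h.comp_hasDerivAt x hc

lemma phi_deriv_t (hφ : ContDiff ℝ (⊤ : ℕ∞) fun p : ℝ × ℝ => φ p.1 p.2) (x t : ℝ) :
    deriv (fun s => φ x s) t = fderiv ℝ (fun p : ℝ × ℝ => φ p.1 p.2) (x, t) (0, 1) :=
  (phi_hasDerivAt_t hφ x t).deriv

lemma phi_deriv_x (hφ : ContDiff ℝ (⊤ : ℕ∞) fun p : ℝ × ℝ => φ p.1 p.2) (x t : ℝ) :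
    deriv (fun y => φ y t) x = fderiv ℝ (fun p : ℝ × ℝ => φ p.1 p.2) (x, t) (1, 0) :=
  (phi_hasDerivAt_x hφ x t).deriv

lemma phi_fderiv_apply_continuous (hφ : ContDiff ℝ (⊤ : ℕ∞) fun p : ℝ × ℝ => φ p.1 p.2) (v : ℝ × ℝ) :
    Continuous fun p : ℝ × ℝ => fderiv ℝ (fun p : ℝ × ℝ => φ p.1 p.2) p v :=
  (hφ.continuous_fderiv (by simp)).clm_apply continuous_const

end phi
lemma UU_hasDerivAt {x t : ℝ} (ht : t < 1 / 2) (hxt : x ≠ t) :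
    HasDerivAt (fun s => UU x s) (UUt x t) t := by
  rcases lt_or_gt_of_ne hxt with hlt | hgt
  · have hev : (fun s => UU x s) =ᶠ[nhds t] fun _ => (1:ℝ) := by
      filter_upwards [Ioi_mem_nhds hlt] with s hs
      simp only [UU, if_pos (show x < s from hs)]
    have h2 := (hasDerivAt_const t (1:ℝ)).congr_of_eventuallyEq hev
    have hU : UUt x t = 0 := by unfold UUt; rw [if_neg (fun h => lt_asymm hlt h.1)]
    rw [hU]
    exact h2
  · by_cases hx2 : x ≤ 1 / 2
    · have hev : (fun s => UU x s) =ᶠ[nhds t] fun s => (1 - 2 * x) / (1 - 2 * s) := by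
        filter_upwards [Iio_mem_nhds hgt] with s hs
        simp only [UU, if_neg (not_lt.2 (le_of_lt (mem_Iio.1 hs))), if_pos hx2]
      have hne : (1 - 2 * t) ≠ 0 := by intro h; nlinarith
      have h1 : HasDerivAt (fun s : ℝ => 1 - 2 * s) (-2) t := by
        exact (((hasDerivAt_id' t).const_mul (2:ℝ)).const_sub (1:ℝ)).congr_deriv (by norm_num)
      have h2 := (h1.inv hne).const_mul (1 - 2 * x)
      have hval : (1 - 2 * x) * (- -2 / (1 - 2 * t) ^ 2) = 2 * (1 - 2 * x) / (1 - 2 * t) ^ 2 := by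
        ring
      rw [hval] at h2
      replace h2 : HasDerivAt (fun s => (1 - 2 * x) / (1 - 2 * s)) (2 * (1 - 2 * x) / (1 - 2 * t) ^ 2) t := by
        refine h2.congr_of_eventuallyEq (Filter.Eventually.of_forall fun s => ?_); simp [div_eq_mul_inv]
      have h4 := h2.congr_of_eventuallyEq hev
      have hU : UUt x t = 2 * (1 - 2 * x) / (1 - 2 * t) ^ 2 := by
        unfold UUt; rw [if_pos ⟨hgt, hx2⟩]
      rw [hU]
      exact h4
    · have hev : (fun s => UU x s) =ᶠ[nhds t] fun _ => (0:ℝ) := by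
        filter_upwards [Iio_mem_nhds hgt] with s hs
        simp only [UU, if_neg (not_lt.2 (le_of_lt (mem_Iio.1 hs))), if_neg hx2]
      have h2 := (hasDerivAt_const t (0:ℝ)).congr_of_eventuallyEq hev
      have hU : UUt x t = 0 := by unfold UUt; rw [if_neg (fun h => hx2 h.2)]
      rw [hU]
      exact h2

lemma UU_sub_le {x s s' c : ℝ} (hc : 0 < c) (hs : c ≤ 1 - 2 * s) (hs' : c ≤ 1 - 2 * s') :
    |UU x s - UU x s'| ≤ 2 * |1 - 2 * x| / c ^ 2 * |s - s'| := by
  have h1 : s < 1 / 2 := by linarith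
  have h1' : s' < 1 / 2 := by linarith
  rw [UU_eq_clamp _ _ h1, UU_eq_clamp _ _ h1']
  set a := (1 - 2 * x) / (1 - 2 * s)
  set b := (1 - 2 * x) / (1 - 2 * s')
  have key : |a - b| ≤ 2 * |1 - 2 * x| / c ^ 2 * |s - s'| := by
    have hp : (0:ℝ) < 1 - 2 * s := lt_of_lt_of_le hc hs
    have hp' : (0:ℝ) < 1 - 2 * s' := lt_of_lt_of_le hc hs'
    have heq : a - b = (1 - 2 * x) * (2 * (s - s')) / ((1 - 2 * s) * (1 - 2 * s')) := by
      show (1 - 2 * x) / (1 - 2 * s) - (1 - 2 * x) / (1 - 2 * s') = _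
      rw [div_sub_div _ _ hp.ne' hp'.ne']; congr 1; ring
    rw [heq, abs_div, abs_mul]
    have hD : c ^ 2 ≤ |(1 - 2 * s) * (1 - 2 * s')| := by
      rw [abs_of_pos (mul_pos hp hp')]; nlinarith
    have step : |1 - 2 * x| * |2 * (s - s')| / |(1 - 2 * s) * (1 - 2 * s')| ≤
        |1 - 2 * x| * |2 * (s - s')| / c ^ 2 :=
      div_le_div_of_nonneg_left (by positivity) (by positivity) hD
    refine step.trans (le_of_eq ?_)
    rw [abs_mul, abs_of_nonneg (by norm_num : (0:ℝ) ≤ (2:ℝ))]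
    ring
  calc |max 0 (min 1 a) - max 0 (min 1 b)| ≤ max |(0:ℝ) - 0| |min 1 a - min 1 b| :=
        abs_max_sub_max_le_max 0 (min 1 a) 0 (min 1 b)
    _ = |min 1 a - min 1 b| := by simp
    _ ≤ max |(1:ℝ) - 1| |a - b| := abs_min_sub_min_le_max 1 a 1 b
    _ = |a - b| := by simp
    _ ≤ _ := key

lemma UUt_abs_le {x t c : ℝ} (ht0 : 0 ≤ t) (hc : 0 < c) (hct : c ≤ 1 - 2 * t) :
    |UUt x t| ≤ 2 / c ^ 2 := by
  unfold UUt
  split_ifs with h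
  · rw [abs_div]
    have h1 : |2 * (1 - 2 * x)| ≤ 2 := by
      rw [abs_mul, abs_of_nonneg (by norm_num : (0:ℝ) ≤ 2)]
      have : |1 - 2 * x| ≤ 1 := by
        rw [abs_le]; constructor <;> nlinarith [h.1, h.2]
      nlinarith [this]
    have h2 : c ^ 2 ≤ |(1 - 2 * t) ^ 2| := by
      rw [abs_of_nonneg (sq_nonneg _)]; nlinarith
    exact div_le_div₀ (by norm_num) h1 (by positivity) h2
  · simp; positivity

lemma UU_meas_slice (t : ℝ) : Measurable fun x => UU x t :=
  UU_measurable.comp (measurable_id.prodMk measurable_const)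

lemma UUt_meas_slice (t : ℝ) : Measurable fun x => UUt x t := by
  unfold UUt
  exact Measurable.ite (measurableSet_Ioc (a := t) (b := 1/2)) (by fun_prop) measurable_const

lemma core_IBP {φ : ℝ → ℝ → ℝ} (hφ : ContDiff ℝ (⊤ : ℕ∞) fun p : ℝ × ℝ => φ p.1 p.2)
    {t r M : ℝ} (ht0 : 0 ≤ t) (ht : t < 1 / 2) (hr : 0 ≤ r) (hM : 0 ≤ M)
    (hz : ∀ x s, r < |x| → φ x s = 0) (hb : ∀ x s, |φ x s| ≤ M)
    (hbx : ∀ x, |deriv (fun y => φ y t) x| ≤ M) :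
    ∫ x : ℝ, UUt x t * φ x t = ∫ x : ℝ, (UU x t) ^ 2 / 2 * deriv (fun y => φ y t) x := by
  have hne : (1 - 2 * t) ≠ 0 := by intro h; nlinarith
  have h2t : (0:ℝ) < 1 - 2 * t := by nlinarith
  set S : ℝ := r + 1 with hS
  have hder : ∀ x, deriv (fun y => φ y t) x
      = fderiv ℝ (fun p : ℝ × ℝ => φ p.1 p.2) (x, t) (1, 0) := fun x => phi_deriv_x hφ x t
  have hφxc : Continuous fun x => deriv (fun y => φ y t) x := by
    have := (phi_fderiv_apply_continuous hφ (1, 0)).comp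
      (continuous_id.prodMk continuous_const : Continuous fun x : ℝ => (x, t))
    simpa [Function.comp_def, ← hder] using this
  have hφtc : Continuous fun x => φ x t :=
    hφ.continuous.comp (continuous_id.prodMk continuous_const)
  have hderzero : ∀ x, r < |x| → deriv (fun y => φ y t) x = 0 := by
    intro x hx
    have hev : (fun y => φ y t) =ᶠ[nhds x] fun _ => (0:ℝ) := by
      filter_upwards [(isOpen_lt continuous_const continuous_abs).mem_nhds
        (show x ∈ {y : ℝ | r < |y|} from hx)] with y hy
      exact hz y t hy
    rw [hev.deriv_eq, deriv_const]
  -- LHS reduction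
  have hLHS : ∫ x : ℝ, UUt x t * φ x t = ∫ x in t..(1/2),
      2 * (1 - 2 * x) / (1 - 2 * t) ^ 2 * φ x t := by
    rw [intervalIntegral.integral_of_le (by linarith : t ≤ 1/2)]
    rw [← setIntegral_eq_integral_of_forall_compl_eq_zero
      (s := Ioc t (1/2)) (f := fun x => UUt x t * φ x t) (fun x hx => by
        have h0 : UUt x t = 0 := by
          unfold UUt; rw [if_neg (by simpa [mem_Ioc] using hx)]
        show UUt x t * φ x t = 0
        rw [h0, zero_mul])]
    refine setIntegral_congr_fun measurableSet_Ioc (fun x hx => ?_)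
    have h0 : UUt x t = 2 * (1 - 2 * x) / (1 - 2 * t) ^ 2 := by
      unfold UUt; rw [if_pos ⟨hx.1, hx.2⟩]
    rw [h0]
  -- RHS reduction
  set f2 : ℝ → ℝ := fun x => (UU x t) ^ 2 / 2 * deriv (fun y => φ y t) x with hf2
  have hf2m : AEStronglyMeasurable f2 volume :=
    ((((UU_meas_slice t).pow_const 2).div_const 2).mul hφxc.measurable).aestronglyMeasurable
  have hUb : ∀ x, |UU x t| ≤ 1 := by
    intro x
    have h1 := UU_mem x t ht
    rw [abs_le]; exact ⟨by linarith [h1.1], h1.2⟩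
  have hf2b : ∀ x, |f2 x| ≤ M := by
    intro x
    show |UU x t ^ 2 / 2 * deriv (fun y => φ y t) x| ≤ M
    rw [abs_mul, abs_div]
    calc |UU x t ^ 2| / |2| * |deriv (fun y => φ y t) x| ≤ 1 / 2 * M := by
          apply mul_le_mul _ (hbx x) (abs_nonneg _) (by norm_num)
          rw [abs_pow]
          have := hUb x
          rw [show |(2:ℝ)| = 2 by norm_num]
          nlinarith [abs_nonneg (UU x t)]
      _ ≤ M := by linarith
  have hf2z : ∀ x, r < |x| → f2 x = 0 := fun x hx => by
    show UU x t ^ 2 / 2 * deriv (fun y => φ y t) x = 0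
    rw [hderzero x hx, mul_zero]
  have hf2int : Integrable f2 := integrable_of_bounded_support hf2m hr hf2b hf2z
  have hRHS1 : ∫ x : ℝ, f2 x = ∫ x in (-S)..S, f2 x := by
    rw [intervalIntegral.integral_of_le (by linarith : -S ≤ S)]
    rw [← setIntegral_eq_integral_of_forall_compl_eq_zero
      (s := Ioc (-S) S) (f := f2) (fun x hx => ?_)]
    have hrx : r < |x| := by
      simp only [mem_Ioc, not_and_or, not_lt, not_le, hS] at hx
      rcases hx with h | h
      · exact lt_abs.2 (Or.inr (by linarith))
      · exact lt_abs.2 (Or.inl (by linarith))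
    exact hf2z x hrx
  have hii : ∀ a b : ℝ, IntervalIntegrable f2 volume a b := fun a b =>
    hf2int.intervalIntegrable
  have hsplit : ∫ x in (-S)..S, f2 x =
      (∫ x in (-S)..t, f2 x) + (∫ x in t..(1/2), f2 x) + ∫ x in (1/2 : ℝ)..S, f2 x := by
    rw [intervalIntegral.integral_add_adjacent_intervals (hii _ _) (hii _ _),
      intervalIntegral.integral_add_adjacent_intervals (hii _ _) (hii _ _)]
  have hvx : ∀ x : ℝ, HasDerivAt (fun y => φ y t) (deriv (fun y => φ y t) x) x := by
    intro x
    rw [hder x]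
    exact phi_hasDerivAt_x hφ x t
  have hphiS : φ (-S) t = 0 := by
    refine hz _ _ ?_
    rw [abs_neg, abs_of_nonneg (show (0:ℝ) ≤ S by rw [hS]; linarith), hS]
    linarith
  have hpiece1 : ∫ x in (-S)..t, f2 x = 1 / 2 * φ t t := by
    have e1 : EqOn f2 (fun x => 1 / 2 * deriv (fun y => φ y t) x) (uIcc (-S) t) := by
      intro x hx
      rw [uIcc_of_le (by linarith : -S ≤ t), mem_Icc] at hx
      have hU1 : UU x t = 1 := by
        unfold UU
        rcases lt_or_eq_of_le hx.2 with h | h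
        · rw [if_pos h]
        · rw [if_neg (by simp [h]), if_pos (by linarith [h] : x ≤ 1/2), h, div_self hne]
      show UU x t ^ 2 / 2 * deriv (fun y => φ y t) x = 1 / 2 * deriv (fun y => φ y t) x
      rw [hU1]; norm_num
    rw [intervalIntegral.integral_congr e1, intervalIntegral.integral_const_mul]
    rw [intervalIntegral.integral_eq_sub_of_hasDerivAt (fun x _ => hvx x)
      (hφxc.intervalIntegrable _ _), hphiS, sub_zero]
  have hpiece3 : ∫ x in (1/2 : ℝ)..S, f2 x = 0 := by
    have e3 : EqOn f2 (fun _ => (0:ℝ)) (uIcc (1/2) S) := by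
      intro x hx
      rw [uIcc_of_le (by simp [hS]; linarith : (1/2:ℝ) ≤ S), mem_Icc] at hx
      have hU0 : UU x t = 0 := by
        unfold UU
        rw [if_neg (by push_neg; linarith [hx.1] : ¬ x < t)]
        rcases lt_or_eq_of_le hx.1 with h | h
        · rw [if_neg (by push_neg; linarith)]
        · rw [if_pos (by linarith), ← h]; norm_num
      show UU x t ^ 2 / 2 * deriv (fun y => φ y t) x = 0
      rw [hU0]; norm_num
    rw [intervalIntegral.integral_congr e3]
    simp
  have hpiece2 : ∫ x in t..(1/2), f2 x = -(1/2) * φ t t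
      + ∫ x in t..(1/2), 2 * (1 - 2 * x) / (1 - 2 * t) ^ 2 * φ x t := by
    set w : ℝ → ℝ := fun x => (1 - 2 * x) ^ 2 / (2 * (1 - 2 * t) ^ 2) with hw
    set w' : ℝ → ℝ := fun x => -(2 * (1 - 2 * x) / (1 - 2 * t) ^ 2) with hw'
    have hwd : ∀ x : ℝ, HasDerivAt w (w' x) x := by
      intro x
      have h1 : HasDerivAt (fun x : ℝ => 1 - 2 * x) (-2) x := by
        exact (((hasDerivAt_id' x).const_mul (2:ℝ)).const_sub (1:ℝ)).congr_deriv (by norm_num)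
      have h2 := (h1.pow 2).div_const (2 * (1 - 2 * t) ^ 2)
      have hval : ((2:ℕ) : ℝ) * (1 - 2 * x) ^ (2 - 1) * (-2) / (2 * (1 - 2 * t) ^ 2)
          = w' x := by
        rw [hw']; push_cast; field_simp
      rw [hval] at h2
      exact h2
    have e2 : EqOn f2 (fun x => w x * deriv (fun y => φ y t) x) (uIcc t (1/2)) := by
      intro x hx
      rw [uIcc_of_le (by linarith : t ≤ 1/2), mem_Icc] at hx
      have hU : UU x t = (1 - 2 * x) / (1 - 2 * t) := by
        unfold UU
        rw [if_neg (by push_neg; exact hx.1), if_pos hx.2]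
      show UU x t ^ 2 / 2 * deriv (fun y => φ y t) x = w x * deriv (fun y => φ y t) x
      rw [hU, hw, div_pow]
      rw [div_div]
      ring
    rw [intervalIntegral.integral_congr e2]
    have hIBP := intervalIntegral.integral_mul_deriv_eq_deriv_mul
      (a := t) (b := (1/2 : ℝ))
      (u := w) (u' := w') (v := fun y => φ y t) (v' := fun x => deriv (fun y => φ y t) x)
      (fun x _ => hwd x) (fun x _ => hvx x)
      ((Continuous.intervalIntegrable (by rw [hw']; fun_prop) _ _))
      (hφxc.intervalIntegrable _ _)
    rw [hIBP]
    have hw12 : w (1/2) = 0 := by rw [hw]; norm_num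
    have hwt : w t = 1/2 := by rw [hw]; field_simp
    rw [hw12, hwt, zero_mul]
    have : ∫ x in t..(1/2), w' x * φ x t
        = - ∫ x in t..(1/2), 2 * (1 - 2 * x) / (1 - 2 * t) ^ 2 * φ x t := by
      rw [← intervalIntegral.integral_neg]
      refine intervalIntegral.integral_congr (fun x _ => ?_)
      rw [hw']; ring
    rw [this]
    ring
  rw [hLHS, hRHS1, hsplit, hpiece1, hpiece2, hpiece3]
  ring

lemma intervalIntegrable_of_bound (G : ℝ → ℝ) (hGsm : StronglyMeasurable G) (T₀ B : ℝ)
    (hT : 0 ≤ T₀) (hb : ∀ s ∈ Ioc (0:ℝ) T₀, |G s| ≤ B) :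
    IntervalIntegrable G volume 0 T₀ := by
  rw [intervalIntegrable_iff_integrableOn_Ioc_of_le hT]
  refine Integrable.mono' (g := fun _ => B)
    (integrableOn_const measure_Ioc_lt_top.ne)
    hGsm.aestronglyMeasurable.restrict ?_
  rw [ae_restrict_iff' measurableSet_Ioc]
  apply ae_of_all
  intro s hs
  rw [Real.norm_eq_abs]
  exact hb s hs


/-- The solution of the inviscid Burgers equation with the continuous piecewise linear
initial data `u₀(x) = 1` for `x < 0`, `1 - 2x` for `0 ≤ x ≤ 1/2`, `0` for `x > 1/2`,
before shock formation: it is continuous on `ℝ × (0, 1/2)` and is a weak solution of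
`u_t + (u²/2)_x = 0` on the time strip `(0, 1/2)` with initial data `u₀`. -/
theorem burgers_piecewise_linear_weak_solution_before_shock :
    let u : ℝ → ℝ → ℝ := fun x t =>
      if x < t then 1 else if x ≤ 1 / 2 then (1 - 2 * x) / (1 - 2 * t) else 0
    let u₀ : ℝ → ℝ := fun x =>
      if x < 0 then 1 else if x ≤ 1 / 2 then 1 - 2 * x else 0
    ContinuousOn (fun p : ℝ × ℝ => u p.1 p.2) {p : ℝ × ℝ | 0 < p.2 ∧ p.2 < 1 / 2} ∧
    (∀ φ : ℝ → ℝ → ℝ,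
      ContDiff ℝ (⊤ : ℕ∞) (fun p : ℝ × ℝ => φ p.1 p.2) →
      HasCompactSupport (fun p : ℝ × ℝ => φ p.1 p.2) →
      tsupport (fun p : ℝ × ℝ => φ p.1 p.2) ⊆ {p : ℝ × ℝ | p.2 < 1 / 2} →
      (∫ t in Ioo (0 : ℝ) (1 / 2), ∫ x : ℝ,
          (u x t * deriv (fun s => φ x s) t
            + u x t ^ 2 / 2 * deriv (fun y => φ y t) x))
        + ∫ x : ℝ, u₀ x * φ x 0 = 0) := by
  intro u u₀
  constructor
  · exact UU_continuousOn.mono (fun p hp => hp.2)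
  · intro φ hφ hφc hsupp
    -- ######## constants and support facts ########
    set Φ : ℝ × ℝ → ℝ := fun p => φ p.1 p.2 with hΦdef
    have hK'c : IsCompact (insert (((0:ℝ), (1:ℝ)/4)) (tsupport Φ)) := hφc.insert _
    obtain ⟨q, hqK', hqmax⟩ := hK'c.exists_isMaxOn (insert_nonempty _ _)
      continuous_snd.continuousOn
    set Tm : ℝ := q.2 with hTmdef
    have hTm4 : (1:ℝ)/4 ≤ Tm := hqmax (mem_insert _ _)
    have hsub : insert (((0:ℝ), (1:ℝ)/4)) (tsupport Φ) ⊆ {p : ℝ × ℝ | p.2 < 1/2} :=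
      insert_subset (by norm_num) hsupp
    have hTm2 : Tm < 1/2 := hsub hqK'
    set T₁ : ℝ := (Tm + 1/2)/2 with hT₁def
    set T₀ : ℝ := (T₁ + 1/2)/2 with hT₀def
    have hTmT₁ : Tm < T₁ := by rw [hT₁def]; linarith
    have hT₁pos : 0 < T₁ := by rw [hT₁def]; linarith
    have hT₁T₀ : T₁ < T₀ := by rw [hT₀def]; linarith
    have hT₀half : T₀ < 1/2 := by rw [hT₀def]; linarith
    have hT₀pos : 0 < T₀ := by linarith
    have hφz1 : ∀ x s, T₁ ≤ s → φ x s = 0 := by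
      intro x s hsge
      by_contra h
      have hmem : ((x, s) : ℝ × ℝ) ∈ insert (((0:ℝ), (1:ℝ)/4)) (tsupport Φ) :=
        mem_insert_of_mem _ (subset_tsupport Φ (Function.mem_support.2 (show Φ (x, s) ≠ 0 from h)))
      have := hqmax hmem
      simp only at this
      have hs2 : s ≤ Tm := this
      linarith
    obtain ⟨r, hrK⟩ := hK'c.isBounded.subset_closedBall 0
    have hr0 : 0 ≤ r := by
      have := hrK (mem_insert _ _)
      simp only [Metric.mem_closedBall] at this
      exact le_trans dist_nonneg this
    have hφzr : ∀ x s, r < |x| → φ x s = 0 := by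
      intro x s hx
      by_contra h
      have hmem := hrK (mem_insert_of_mem _ (subset_tsupport Φ (Function.mem_support.2 (show Φ (x, s) ≠ 0 from h))))
      simp only [Metric.mem_closedBall, dist_zero_right] at hmem
      have hx' : |x| ≤ r := le_trans (norm_fst_le ((x, s) : ℝ × ℝ)) hmem
      linarith
    -- ######## bounds ########
    obtain ⟨M₀, hM₀⟩ := hφc.exists_bound_of_continuous hφ.continuous
    obtain ⟨M₁, hM₁⟩ := (hφc.fderiv (𝕜 := ℝ)).exists_bound_of_continuous
      (hφ.continuous_fderiv (by simp))
    set M : ℝ := max M₀ M₁ + 1 with hMdef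
    have hM₀0 : 0 ≤ M₀ := le_trans (norm_nonneg _) (hM₀ ((0:ℝ), (0:ℝ)))
    have hMpos : 0 < M := by rw [hMdef]; have := le_max_left M₀ M₁; linarith
    have hφb : ∀ x s, |φ x s| ≤ M := by
      intro x s
      have h1 := hM₀ ((x, s) : ℝ × ℝ)
      rw [Real.norm_eq_abs] at h1
      have := le_max_left M₀ M₁
      calc |φ x s| ≤ M₀ := h1
        _ ≤ M := by rw [hMdef]; linarith
    have hfdM : ∀ p : ℝ × ℝ, ‖fderiv ℝ Φ p‖ ≤ M := by
      intro p
      have := le_max_right M₀ M₁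
      calc ‖fderiv ℝ Φ p‖ ≤ M₁ := hM₁ p
        _ ≤ M := by rw [hMdef]; linarith
    have hnorm01 : ‖(((0:ℝ), (1:ℝ)) : ℝ × ℝ)‖ = 1 := by
      simp [Prod.norm_def]
    have hnorm10 : ‖(((1:ℝ), (0:ℝ)) : ℝ × ℝ)‖ = 1 := by
      simp [Prod.norm_def]
    have hφtb : ∀ x s, |deriv (fun s' => φ x s') s| ≤ M := by
      intro x s
      rw [phi_deriv_t hφ x s, ← Real.norm_eq_abs]
      calc ‖fderiv ℝ Φ (x, s) ((0:ℝ), (1:ℝ))‖ ≤ ‖fderiv ℝ Φ (x, s)‖ * ‖(((0:ℝ),(1:ℝ)) : ℝ × ℝ)‖ :=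
            ContinuousLinearMap.le_opNorm _ _
        _ ≤ M := by rw [hnorm01, mul_one]; exact hfdM _
    have hφxb : ∀ x s, |deriv (fun y => φ y s) x| ≤ M := by
      intro x s
      rw [phi_deriv_x hφ x s, ← Real.norm_eq_abs]
      calc ‖fderiv ℝ Φ (x, s) ((1:ℝ), (0:ℝ))‖ ≤ ‖fderiv ℝ Φ (x, s)‖ * ‖(((1:ℝ),(0:ℝ)) : ℝ × ℝ)‖ :=
            ContinuousLinearMap.le_opNorm _ _
        _ ≤ M := by rw [hnorm10, mul_one]; exact hfdM _
    have hφlip : ∀ x s s', |φ x s - φ x s'| ≤ M * |s - s'| := by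
      intro x s s'
      have h := convex_univ.norm_image_sub_le_of_norm_hasDerivWithin_le
        (f := fun s' => φ x s') (f' := fun s' => deriv (fun u => φ x u) s')
        (fun y _ => by
          have h0 := phi_hasDerivAt_t hφ x y
          rw [← phi_deriv_t hφ x y] at h0
          exact h0.hasDerivWithinAt)
        (C := M) (fun y _ => by rw [Real.norm_eq_abs]; exact hφtb x y)
        (mem_univ s') (mem_univ s)
      simpa [Real.norm_eq_abs] using h
    -- ######## continuity of partial derivatives, jointly ########
    have hφtc2 : Continuous fun p : ℝ × ℝ => deriv (fun s => φ p.1 s) p.2 := by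
      have h := phi_fderiv_apply_continuous hφ ((0:ℝ), (1:ℝ))
      have he : (fun p : ℝ × ℝ => deriv (fun s => φ p.1 s) p.2)
          = fun p : ℝ × ℝ => fderiv ℝ Φ p ((0:ℝ), (1:ℝ)) := by
        funext p
        rw [phi_deriv_t hφ p.1 p.2]
      rw [he]; exact h
    have hφxc2 : Continuous fun p : ℝ × ℝ => deriv (fun y => φ y p.2) p.1 := by
      have h := phi_fderiv_apply_continuous hφ ((1:ℝ), (0:ℝ))
      have he : (fun p : ℝ × ℝ => deriv (fun y => φ y p.2) p.1)
          = fun p : ℝ × ℝ => fderiv ℝ Φ p ((1:ℝ), (0:ℝ)) := by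
        funext p
        rw [phi_deriv_x hφ p.1 p.2]
      rw [he]; exact h
    have hφcont : Continuous Φ := hφ.continuous
    -- ######## vanishing of derivatives ########
    have hφtz : ∀ x s, r < |x| → deriv (fun s' => φ x s') s = 0 := by
      intro x s hx
      have he : (fun s' => φ x s') = fun _ => (0:ℝ) := funext fun s' => hφzr x s' hx
      rw [he, deriv_const]
    have hφxz : ∀ x s, r < |x| → deriv (fun y => φ y s) x = 0 := by
      intro x s hx
      have hev : (fun y => φ y s) =ᶠ[nhds x] fun _ => (0:ℝ) := by
        filter_upwards [(isOpen_lt continuous_const continuous_abs).mem_nhds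
          (show x ∈ {y : ℝ | r < |y|} from hx)] with y hy
        exact hφzr y s hy
      rw [hev.deriv_eq, deriv_const]
    have hφtz1 : ∀ x s, T₁ < s → deriv (fun s' => φ x s') s = 0 := by
      intro x s hs
      have hev : (fun s' => φ x s') =ᶠ[nhds s] fun _ => (0:ℝ) := by
        filter_upwards [Ioi_mem_nhds hs] with y hy
        exact hφz1 x y (le_of_lt hy)
      rw [hev.deriv_eq, deriv_const]
    -- ######## F, G and slice integrability ########
    set F : ℝ → ℝ := fun s => ∫ x : ℝ, UU x s * φ x s with hFdef
    set G : ℝ → ℝ := fun s => ∫ x : ℝ,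
      (UU x s * deriv (fun u => φ x u) s + UU x s ^ 2 / 2 * deriv (fun y => φ y s) x) with hGdef
    have hφslice : ∀ s : ℝ, Continuous fun x => φ x s := fun s =>
      hφcont.comp (continuous_id.prodMk continuous_const)
    have hUb : ∀ s, s < 1/2 → ∀ x, |UU x s| ≤ 1 := by
      intro s hs x
      have h1 := UU_mem x s hs
      rw [abs_le]; exact ⟨by linarith [h1.1], h1.2⟩
    have hI1 : ∀ s, s < 1/2 → Integrable (fun x => UU x s * φ x s) := by
      intro s hs
      refine integrable_of_bounded_support
        (((UU_meas_slice s).mul (hφslice s).measurable).aestronglyMeasurable) hr0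
        (M := M) (fun x => ?_) (fun x hx => by rw [hφzr x s hx, mul_zero])
      rw [abs_mul]
      calc |UU x s| * |φ x s| ≤ 1 * M :=
            mul_le_mul (hUb s hs x) (hφb x s) (abs_nonneg _) (by norm_num)
        _ = M := one_mul M
    have hI2 : ∀ s, s < 1/2 → Integrable (fun x => UU x s * deriv (fun u => φ x u) s) := by
      intro s hs
      refine integrable_of_bounded_support
        (((UU_meas_slice s).mul
          ((hφtc2.comp (continuous_id.prodMk continuous_const)).measurable)).aestronglyMeasurable)
        hr0 (M := M) (fun x => ?_) (fun x hx => by rw [hφtz x s hx, mul_zero])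
      rw [abs_mul]
      calc |UU x s| * |deriv (fun u => φ x u) s| ≤ 1 * M :=
            mul_le_mul (hUb s hs x) (hφtb x s) (abs_nonneg _) (by norm_num)
        _ = M := one_mul M
    have hI3 : ∀ s, s < 1/2 → Integrable (fun x => UU x s ^ 2 / 2 * deriv (fun y => φ y s) x) := by
      intro s hs
      refine integrable_of_bounded_support
        (((((UU_meas_slice s).pow_const 2).div_const 2).mul
          ((hφxc2.comp (continuous_id.prodMk continuous_const)).measurable)).aestronglyMeasurable)
        hr0 (M := M) (fun x => ?_) (fun x hx => by rw [hφxz x s hx, mul_zero])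
      rw [abs_mul, abs_div]
      have h1 : |UU x s ^ 2| ≤ 1 := by
        rw [abs_pow]
        nlinarith [hUb s hs x, abs_nonneg (UU x s)]
      calc |UU x s ^ 2| / |2| * |deriv (fun y => φ y s) x| ≤ 1 / 2 * M := by
            apply mul_le_mul _ (hφxb x s) (abs_nonneg _) (by norm_num)
            rw [show |(2:ℝ)| = 2 by norm_num]
            linarith
        _ ≤ M := by linarith
    have hI4 : ∀ s, 0 ≤ s → s < 1/2 → Integrable (fun x => UUt x s * φ x s) := by
      intro s hs0 hs
      have hc : (0:ℝ) < 1 - 2 * s := by linarith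
      refine integrable_of_bounded_support
        (((UUt_meas_slice s).mul (hφslice s).measurable).aestronglyMeasurable) hr0
        (M := 2 / (1 - 2*s) ^ 2 * M) (fun x => ?_) (fun x hx => by rw [hφzr x s hx, mul_zero])
      rw [abs_mul]
      exact mul_le_mul (UUt_abs_le hs0 hc le_rfl) (hφb x s) (abs_nonneg _) (by positivity)
    -- ######## the derivative of F ########
    have hFder : ∀ t ∈ uIcc (0:ℝ) T₀, HasDerivAt F (G t) t := by
      intro t htI
      rw [uIcc_of_le hT₀pos.le, mem_Icc] at htI
      have ht2 : t < 1/2 := lt_of_le_of_lt htI.2 hT₀half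
      set c : ℝ := 1/2 - T₀ with hcdef
      have hcpos : 0 < c := by rw [hcdef]; linarith
      set ε : ℝ := c/2 with hεdef
      have hεpos : 0 < ε := by rw [hεdef]; linarith
      have hball : ∀ s ∈ Metric.ball t ε, c ≤ 1 - 2 * s ∧ s < 1/2 := by
        intro s hs
        rw [Metric.mem_ball, Real.dist_eq, abs_lt] at hs
        have h1 : s < t + ε := by linarith [hs.2]
        rw [hεdef, hcdef] at h1
        refine ⟨?_, by linarith [htI.2]⟩
        rw [hcdef]
        linarith [htI.2]
      set F' : ℝ → ℝ := fun x => UUt x t * φ x t + UU x t * deriv (fun u => φ x u) t with hF'def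
      have hmeas_s : ∀ s : ℝ, AEStronglyMeasurable (fun x => UU x s * φ x s) volume := fun s =>
        ((UU_meas_slice s).mul (hφslice s).measurable).aestronglyMeasurable
      have hF'meas : AEStronglyMeasurable F' volume := by
        apply Measurable.aestronglyMeasurable
        apply Measurable.add
        · exact (UUt_meas_slice t).mul (hφslice t).measurable
        · exact (UU_meas_slice t).mul
            (hφtc2.comp (continuous_id.prodMk continuous_const)).measurable
      set C : ℝ := M + 2 * (3 + 2 * r) / c ^ 2 * M with hCdef
      have hC0 : 0 ≤ C := by
        have h1 : (0:ℝ) ≤ 2 * (3 + 2 * r) := by linarith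
        have h2 : (0:ℝ) ≤ 2 * (3 + 2 * r) / c ^ 2 := div_nonneg h1 (sq_nonneg c)
        have h3 : (0:ℝ) ≤ 2 * (3 + 2 * r) / c ^ 2 * M := mul_nonneg h2 hMpos.le
        rw [hCdef]; linarith
      have hlip : ∀ᵐ x : ℝ, LipschitzOnWith
          (Real.nnabs (((Icc (-(r+1)) (r+1)).indicator (fun _ => C)) x))
          (fun s => UU x s * φ x s) (Metric.ball t ε) := by
        apply ae_of_all
        intro x
        by_cases hxr : x ∈ Icc (-(r+1)) (r+1)
        · rw [indicator_of_mem hxr]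
          apply LipschitzOnWith.of_dist_le_mul
          intro s hs s' hs'
          obtain ⟨hcs, hs12⟩ := hball s hs
          obtain ⟨hcs', hs12'⟩ := hball s' hs'
          rw [Real.dist_eq, Real.dist_eq]
          have key : UU x s * φ x s - UU x s' * φ x s'
              = UU x s * (φ x s - φ x s') + (UU x s - UU x s') * φ x s' := by ring
          rw [key]
          have h1x : |1 - 2 * x| ≤ 3 + 2 * r := by
            rw [mem_Icc] at hxr
            rw [abs_le]
            constructor <;> [linarith [hxr.2]; linarith [hxr.1]]
          calc |UU x s * (φ x s - φ x s') + (UU x s - UU x s') * φ x s'|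
              ≤ |UU x s * (φ x s - φ x s')| + |(UU x s - UU x s') * φ x s'| := abs_add_le _ _
            _ = |UU x s| * |φ x s - φ x s'| + |UU x s - UU x s'| * |φ x s'| := by
                rw [abs_mul, abs_mul]
            _ ≤ 1 * (M * |s - s'|) + (2 * |1 - 2 * x| / c ^ 2 * |s - s'|) * M := by
                apply add_le_add
                · exact mul_le_mul (hUb s hs12 x) (hφlip x s s') (abs_nonneg _) (by norm_num)
                · exact mul_le_mul (UU_sub_le hcpos hcs hcs') (hφb x s') (abs_nonneg _)
                    (by positivity)
            _ ≤ ↑(Real.nnabs C) * |s - s'| := by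
                rw [Real.coe_nnabs, abs_of_nonneg hC0, hCdef]
                have hq : 2 * |1 - 2 * x| / c ^ 2 ≤ 2 * (3 + 2 * r) / c ^ 2 := by
                  gcongr
                nlinarith [abs_nonneg (s - s'), hMpos.le, hq,
                  mul_nonneg (mul_nonneg (sub_nonneg.2 hq) (abs_nonneg (s - s'))) hMpos.le]
        · rw [indicator_of_notMem hxr]
          have hrx : r < |x| := by
            rw [mem_Icc, not_and_or, not_le, not_le] at hxr
            rcases hxr with h | h
            · exact lt_abs.2 (Or.inr (by linarith))
            · exact lt_abs.2 (Or.inl (by linarith))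
          apply LipschitzOnWith.of_dist_le_mul
          intro s hs s' hs'
          rw [Real.dist_eq, hφzr x s hrx, hφzr x s' hrx, mul_zero, mul_zero]
          simp
      have hdiff : ∀ᵐ x : ℝ, HasDerivAt (fun s => UU x s * φ x s) (F' x) t := by
        have hne : ∀ᵐ x : ℝ, x ≠ t := by
          refine ae_iff.mpr ?_
          have he : {x : ℝ | ¬ x ≠ t} = {t} := by ext y; simp
          rw [he]; exact measure_singleton t
        filter_upwards [hne] with x hx
        have h0 := phi_hasDerivAt_t hφ x t
        rw [← phi_deriv_t hφ x t] at h0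
        exact (UU_hasDerivAt ht2 hx).mul h0
      have hkey := (hasDerivAt_integral_of_dominated_loc_of_lip (μ := volume)
        (F := fun s x => UU x s * φ x s) (F' := F') (x₀ := t)
        (bound := (Icc (-(r+1)) (r+1)).indicator (fun _ => C)) (s := Metric.ball t ε) (Metric.ball_mem_nhds t hεpos)
        (Filter.Eventually.of_forall hmeas_s) (hI1 t ht2) hF'meas hlip
        ((integrable_indicator_iff measurableSet_Icc).2
          (integrableOn_const measure_Icc_lt_top.ne))
        hdiff).2
      have hval : ∫ x : ℝ, F' x = G t := by
        have e1 : ∫ x : ℝ, F' x = (∫ x : ℝ, UUt x t * φ x t)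
            + ∫ x : ℝ, UU x t * deriv (fun u => φ x u) t :=
          integral_add (hI4 t htI.1 ht2) (hI2 t ht2)
        have e2 : G t = (∫ x : ℝ, UU x t * deriv (fun u => φ x u) t)
            + ∫ x : ℝ, UU x t ^ 2 / 2 * deriv (fun y => φ y t) x :=
          integral_add (hI2 t ht2) (hI3 t ht2)
        have hcore := core_IBP hφ htI.1 ht2 hr0 hMpos.le hφzr hφb (fun x => hφxb x t)
        rw [e1, e2, hcore]
        ring
      rw [← hval]
      exact hkey
    -- ######## integrability of G on [0, T₀] ########
    have hjoint : StronglyMeasurable (fun q : ℝ × ℝ =>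
        UU q.2 q.1 * deriv (fun u => φ q.2 u) q.1
          + UU q.2 q.1 ^ 2 / 2 * deriv (fun y => φ y q.1) q.2) := by
      apply Measurable.stronglyMeasurable
      apply Measurable.add
      · exact (UU_measurable.comp measurable_swap).mul
          (hφtc2.comp continuous_swap).measurable
      · exact (((UU_measurable.comp measurable_swap).pow_const 2).div_const 2).mul
          (hφxc2.comp continuous_swap).measurable
    have hGsm : StronglyMeasurable G := hjoint.integral_prod_right'
    have hGb : ∀ s, 0 < s → s < 1/2 → |G s| ≤ ∫ x : ℝ,
        ((Icc (-(r+1)) (r+1)).indicator (fun _ => 2 * M)) x := by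
      intro s hs0 hs
      rw [← Real.norm_eq_abs]
      apply norm_integral_le_of_norm_le
      · exact (integrable_indicator_iff measurableSet_Icc).2
          (integrableOn_const measure_Icc_lt_top.ne)
      · apply ae_of_all
        intro x
        by_cases hxr : x ∈ Icc (-(r+1)) (r+1)
        · rw [indicator_of_mem hxr, Real.norm_eq_abs]
          calc |UU x s * deriv (fun u => φ x u) s + UU x s ^ 2 / 2 * deriv (fun y => φ y s) x|
              ≤ |UU x s * deriv (fun u => φ x u) s|
                + |UU x s ^ 2 / 2 * deriv (fun y => φ y s) x| := abs_add_le _ _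
            _ ≤ M + M := by
                apply add_le_add
                · rw [abs_mul]
                  calc |UU x s| * |deriv (fun u => φ x u) s| ≤ 1 * M :=
                      mul_le_mul (hUb s hs x) (hφtb x s) (abs_nonneg _) (by norm_num)
                    _ = M := one_mul M
                · rw [abs_mul, abs_div]
                  have h1 : |UU x s ^ 2| ≤ 1 := by
                    rw [abs_pow]
                    nlinarith [hUb s hs x, abs_nonneg (UU x s)]
                  calc |UU x s ^ 2| / |2| * |deriv (fun y => φ y s) x| ≤ 1 / 2 * M := by
                        apply mul_le_mul _ (hφxb x s) (abs_nonneg _) (by norm_num)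
                        rw [show |(2:ℝ)| = 2 by norm_num]
                        linarith
                    _ ≤ M := by linarith
            _ = 2 * M := by ring
        · rw [indicator_of_notMem hxr]
          have hrx : r < |x| := by
            rw [mem_Icc, not_and_or, not_le, not_le] at hxr
            rcases hxr with h | h
            · exact lt_abs.2 (Or.inr (by linarith))
            · exact lt_abs.2 (Or.inl (by linarith))
          rw [hφtz x s hrx, hφxz x s hrx, mul_zero, mul_zero, add_zero]
          simp
    have hGint : IntervalIntegrable G volume 0 T₀ :=
      intervalIntegrable_of_bound G hGsm T₀ _ hT₀pos.le
        (fun s hs => hGb s hs.1 (lt_of_le_of_lt hs.2 hT₀half))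
    -- ######## FTC and endpoint values ########
    have hFTC : ∫ s in (0:ℝ)..T₀, G s = F T₀ - F 0 :=
      intervalIntegral.integral_eq_sub_of_hasDerivAt hFder hGint
    have hFT₀ : F T₀ = 0 := by
      have he : (fun x => UU x T₀ * φ x T₀) = fun _ => (0:ℝ) := by
        funext x
        rw [hφz1 x T₀ hT₁T₀.le, mul_zero]
      show (∫ x : ℝ, UU x T₀ * φ x T₀) = 0
      rw [he, integral_zero]
    have hF0 : F 0 = ∫ x : ℝ, u₀ x * φ x 0 := by
      show (∫ x : ℝ, UU x 0 * φ x 0) = ∫ x : ℝ, u₀ x * φ x 0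
      congr 1
      funext x
      have : UU x 0 = u₀ x := by
        unfold UU
        show _ = if x < 0 then 1 else if x ≤ 1 / 2 then 1 - 2 * x else 0
        rcases lt_or_ge x 0 with h | h
        · rw [if_pos h, if_pos h]
        · rw [if_neg (not_lt.2 h), if_neg (not_lt.2 h)]
          rcases le_or_gt x (1/2) with h2 | h2
          · rw [if_pos h2, if_pos h2]
            norm_num
          · rw [if_neg (not_le.2 h2), if_neg (not_le.2 h2)]
      rw [this]
    -- ######## reduce outer integral to [0, T₀] ########
    have hGzero : ∀ s, T₁ < s → G s = 0 := by
      intro s hs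
      have he : (fun x => UU x s * deriv (fun u => φ x u) s
          + UU x s ^ 2 / 2 * deriv (fun y => φ y s) x) = fun _ => (0:ℝ) := by
        funext x
        rw [hφtz1 x s hs]
        have he2 : (fun y => φ y s) = fun _ => (0:ℝ) := funext fun y => hφz1 y s hs.le
        rw [he2, deriv_const, mul_zero, mul_zero, add_zero]
      show (∫ x : ℝ, (UU x s * deriv (fun u => φ x u) s
          + UU x s ^ 2 / 2 * deriv (fun y => φ y s) x)) = 0
      rw [he, integral_zero]
    have hOuter : ∫ s in Ioo (0:ℝ) (1/2), G s = ∫ s in (0:ℝ)..T₀, G s := by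
      rw [intervalIntegral.integral_of_le hT₀pos.le, integral_Ioc_eq_integral_Ioo]
      apply setIntegral_eq_of_subset_of_forall_diff_eq_zero measurableSet_Ioo
      · exact Ioo_subset_Ioo le_rfl hT₀half.le
      · intro s hsd
        obtain ⟨hs1, hs2⟩ := hsd
        rw [mem_Ioo] at hs1
        have : T₀ ≤ s := by
          by_contra hcon
          exact hs2 (mem_Ioo.2 ⟨hs1.1, not_le.1 hcon⟩)
        exact hGzero s (by linarith)
    -- ######## conclusion ########
    have hgoal : (∫ t in Ioo (0:ℝ) (1/2), ∫ x : ℝ,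
        (u x t * deriv (fun s => φ x s) t + u x t ^ 2 / 2 * deriv (fun y => φ y t) x))
        = ∫ s in Ioo (0:ℝ) (1/2), G s := rfl
    rw [hgoal, hOuter, hFTC, hFT₀, ← hF0]
    ring
end
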